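/- arXiv:1911.13063 — 10 statements merged into one kernel-verified Lean document; each statement's English description precedes it below -/
import Mathlib

section
/- Under the power asymmetry specification, for every bidder i and every real w, the joint probability that the winning bid is at most w and bidder i wins equals F(w)^{Λ_{N|i}} − (Λ_{N|i}/Λ_N) · F(w)^{Λ_N}; that is, P(max_{j≠i} V_j ≤ min(w, V_i)) = F(w)^{Λ_{N|i}} − (Λ_{N|i}/Λ_N) F(w)^{Λ_N}. -/
/-!
Write `a = λ_i` and `b = Λ_{N|i}`. The rivals' maximum has c.d.f. `F^b` and is independent of
`V_i`, so conditioning on `V_i = x` gives probability `F(min w x)^b = min (F w) (F x)^b`.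
As `F` is continuous, `F(V_i)` has c.d.f. `u^a` on `[0, 1]` (probability integral transform),
so the answer is `∫₀¹ min(c, u)^b · a u^(a-1) du` with `c = F w`; splitting at `u = c` gives
`a/(a+b) · c^(a+b) + c^b (1 - c^a)`.
-/

open MeasureTheory ProbabilityTheory Set Filter Topology Interval

lemma Monotone.exists_preimage_Iic_eq_Iic {F : ℝ → ℝ} (hF : Monotone F) (hFc : Continuous F)
    {u : ℝ} (hle : ∃ x, F x ≤ u) (hlt : ∃ x, u < F x) :
    ∃ s, F ⁻¹' Iic u = Iic s ∧ F s = u := by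
  obtain ⟨x₀, hx₀⟩ := hle
  obtain ⟨x₁, hx₁⟩ := hlt
  set S := F ⁻¹' Iic u
  have hbdd : BddAbove S := ⟨x₁, fun y hy => (hF.reflect_lt (lt_of_le_of_lt hy hx₁)).le⟩
  have hsS : sSup S ∈ S := (isClosed_Iic.preimage hFc).csSup_mem ⟨x₀, hx₀⟩ hbdd
  have hS : S = Iic (sSup S) :=
    Subset.antisymm (fun y hy => le_csSup hbdd hy) fun y hy => (hF hy).trans hsS
  refine ⟨sSup S, hS, le_antisymm hsS ?_⟩
  -- `F > u` to the right of `sSup S`, so `u ≤ F (sSup S)` by right continuity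
  refine _root_.ge_of_tendsto (hFc.continuousWithinAt (s := Ioi (sSup S)))
    (eventually_nhdsWithin_of_forall fun y hy => ?_)
  by_contra! hy'
  exact (mem_Ioi.1 hy).not_ge (hS ▸ hy'.le : y ∈ Iic (sSup S))

noncomputable def powerLaw (a : ℝ) : Measure ℝ :=
  (volume.restrict (Ioc 0 1)).withDensity fun u => ENNReal.ofReal (a * u ^ (a - 1))

section powerLaw

variable {a : ℝ}

lemma integral_mul_rpow_sub_one (ha : 0 < a) (x y : ℝ) :
    ∫ u in x..y, a * u ^ (a - 1) = y ^ a - x ^ a := by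
  rw [intervalIntegral.integral_const_mul, integral_rpow (Or.inl (by linarith)), sub_add_cancel]
  field_simp

lemma intervalIntegrable_mul_rpow_sub_one (ha : 0 < a) (x y : ℝ) :
    IntervalIntegrable (fun u => a * u ^ (a - 1)) volume x y :=
  (intervalIntegral.intervalIntegrable_rpow' (by linarith)).const_mul a

lemma lintegral_Ioc_ofReal_mul_rpow_sub_one (ha : 0 < a) {c : ℝ} (hc : 0 ≤ c) :
    ∫⁻ u in Ioc 0 c, ENNReal.ofReal (a * u ^ (a - 1)) = ENNReal.ofReal (c ^ a) := by
  rw [← ofReal_integral_eq_lintegral_ofReal, ← intervalIntegral.integral_of_le hc,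
    integral_mul_rpow_sub_one ha, Real.zero_rpow ha.ne', sub_zero]
  · exact (intervalIntegrable_iff_integrableOn_Ioc_of_le hc).1
      (intervalIntegrable_mul_rpow_sub_one ha 0 c)
  · filter_upwards [ae_restrict_mem measurableSet_Ioc] with u hu
    have := Real.rpow_nonneg hu.1.le (a - 1)
    positivity

lemma powerLaw_Iic (u : ℝ) :
    powerLaw a (Iic u) = ∫⁻ v in Ioc 0 (min 1 u), ENNReal.ofReal (a * v ^ (a - 1)) := by
  rw [powerLaw, withDensity_apply _ measurableSet_Iic, Measure.restrict_restrict measurableSet_Iic,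
    inter_comm, Ioc_inter_Iic]

lemma powerLaw_Iic_of_nonpos {u : ℝ} (hu : u ≤ 0) : powerLaw a (Iic u) = 0 := by
  rw [powerLaw_Iic, Ioc_eq_empty (min_le_of_right_le hu).not_gt, Measure.restrict_empty,
    lintegral_zero_measure]

lemma powerLaw_Iic_of_nonneg (ha : 0 < a) {u : ℝ} (hu : 0 ≤ u) :
    powerLaw a (Iic u) = ENNReal.ofReal (min 1 u ^ a) := by
  rw [powerLaw_Iic, lintegral_Ioc_ofReal_mul_rpow_sub_one ha (le_min zero_le_one hu)]

lemma integral_min_rpow_mul_rpow_sub_one (ha : 0 < a) {b c : ℝ} (hb : 0 ≤ b) (hc0 : 0 ≤ c)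
    (hc1 : c ≤ 1) :
    ∫ u in 0..1, min c u ^ b * (a * u ^ (a - 1)) = c ^ b - b / (a + b) * c ^ (a + b) := by
  have hab : 0 < a + b := by linarith
  have h_below : ∀ u ∈ Ι 0 c,
      min c u ^ b * (a * u ^ (a - 1)) = a / (a + b) * ((a + b) * u ^ (a + b - 1)) := by
    intro u hu
    rw [uIoc_of_le hc0] at hu
    rw [min_eq_right hu.2, show a + b - 1 = b + (a - 1) by ring, Real.rpow_add hu.1]
    field_simp
  have h_above : ∀ u ∈ Ι c 1, min c u ^ b * (a * u ^ (a - 1)) = c ^ b * (a * u ^ (a - 1)) := by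
    intro u hu
    rw [uIoc_of_le hc1] at hu
    rw [min_eq_left hu.1.le]
  have hi_below : IntervalIntegrable (fun u => min c u ^ b * (a * u ^ (a - 1))) volume 0 c :=
    ((intervalIntegrable_mul_rpow_sub_one hab 0 c).const_mul _).congr
      fun u hu => (h_below u hu).symm
  have hi_above : IntervalIntegrable (fun u => min c u ^ b * (a * u ^ (a - 1))) volume c 1 :=
    ((intervalIntegrable_mul_rpow_sub_one ha c 1).const_mul _).congr
      fun u hu => (h_above u hu).symm
  rw [← intervalIntegral.integral_add_adjacent_intervals hi_below hi_above,
    intervalIntegral.integral_congr_ae (.of_forall h_below),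
    intervalIntegral.integral_congr_ae (.of_forall h_above),
    intervalIntegral.integral_const_mul (a / (a + b)), intervalIntegral.integral_const_mul (c ^ b),
    integral_mul_rpow_sub_one hab, integral_mul_rpow_sub_one ha, Real.zero_rpow hab.ne',
    Real.one_rpow, Real.rpow_add' hc0 hab.ne']
  field_simp
  ring

lemma rpow_sub_div_add_mul_rpow_add_nonneg (ha : 0 < a) {b c : ℝ} (hb : 0 ≤ b) (hc0 : 0 ≤ c)
    (hc1 : c ≤ 1) : 0 ≤ c ^ b - b / (a + b) * c ^ (a + b) := by
  have hab : 0 < a + b := by linarith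
  have hca : c ^ a ≤ 1 := Real.rpow_le_one hc0 hc1 ha.le
  have hfrac : b / (a + b) ≤ 1 := (div_le_one hab).2 (by linarith)
  rw [Real.rpow_add' hc0 hab.ne', ← mul_assoc, ← one_sub_mul]
  exact mul_nonneg (by nlinarith [div_nonneg hb hab.le, Real.rpow_nonneg hc0 a])
    (Real.rpow_nonneg hc0 b)

lemma lintegral_ofReal_min_rpow_powerLaw (ha : 0 < a) {b c : ℝ} (hb : 0 ≤ b) (hc0 : 0 ≤ c)
    (hc1 : c ≤ 1) :
    ∫⁻ u, ENNReal.ofReal (min c u ^ b) ∂powerLaw a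
      = ENNReal.ofReal (c ^ b - b / (a + b) * c ^ (a + b)) := by
  set f : ℝ → ℝ := fun u => min c u ^ b * (a * u ^ (a - 1))
  have hf_nonneg : ∀ u ∈ Ioc (0 : ℝ) 1, 0 ≤ f u := fun u hu =>
    mul_nonneg (Real.rpow_nonneg (le_min hc0 hu.1.le) b)
      (mul_nonneg ha.le (Real.rpow_nonneg hu.1.le _))
  have hf_int : IntegrableOn f (Ioc 0 1) := by
    refine ((intervalIntegrable_iff_integrableOn_Ioc_of_le zero_le_one).1
      (intervalIntegrable_mul_rpow_sub_one ha 0 1)).mono' (by fun_prop) ?_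
    filter_upwards [ae_restrict_mem measurableSet_Ioc] with u hu
    rw [Real.norm_of_nonneg (hf_nonneg u hu)]
    exact mul_le_of_le_one_left (mul_nonneg ha.le (Real.rpow_nonneg hu.1.le _))
      (Real.rpow_le_one (le_min hc0 hu.1.le) (min_le_of_left_le hc1) hb)
  calc ∫⁻ u, ENNReal.ofReal (min c u ^ b) ∂powerLaw a
      = ∫⁻ u in Ioc 0 1, ENNReal.ofReal (f u) := by
        rw [powerLaw, lintegral_withDensity_eq_lintegral_mul _ (by fun_prop) (by fun_prop)]
        refine setLIntegral_congr_fun measurableSet_Ioc fun u hu => ?_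
        rw [Pi.mul_apply, mul_comm, ← ENNReal.ofReal_mul (Real.rpow_nonneg (le_min hc0 hu.1.le) b)]
    _ = ENNReal.ofReal (c ^ b - b / (a + b) * c ^ (a + b)) := by
        rw [← ofReal_integral_eq_lintegral_ofReal hf_int
          ((ae_restrict_mem measurableSet_Ioc).mono hf_nonneg), ← intervalIntegral.integral_of_le
          zero_le_one, integral_min_rpow_mul_rpow_sub_one ha hb hc0 hc1]

lemma map_eq_powerLaw {F : ℝ → ℝ} (hFmono : Monotone F) (hFcont : Continuous F)
    (hF0 : Tendsto F atBot (𝓝 0)) (hF1 : Tendsto F atTop (𝓝 1)) (ha : 0 < a)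
    {ν : Measure ℝ} [IsProbabilityMeasure ν] (hν : ∀ v, ν (Iic v) = ENNReal.ofReal (F v ^ a)) :
    ν.map F = powerLaw a := by
  refine Measure.ext_of_Iic _ _ fun u => ?_
  rw [Measure.map_apply hFcont.measurable measurableSet_Iic]
  rcases le_or_gt 1 u with hu1 | hu1
  · rw [powerLaw_Iic_of_nonneg ha (zero_le_one.trans hu1), min_eq_left hu1, Real.one_rpow,
      ENNReal.ofReal_one, show F ⁻¹' Iic u = univ from
        eq_univ_of_forall fun x => (hFmono.ge_of_tendsto hF1 x).trans hu1, measure_univ]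
  by_cases hle : ∃ x, F x ≤ u
  · obtain ⟨s, hs, hFs⟩ :=
      hFmono.exists_preimage_Iic_eq_Iic hFcont hle (hF1.eventually (lt_mem_nhds hu1)).exists
    obtain ⟨x, hx⟩ := hle
    rw [hs, hν, hFs, powerLaw_Iic_of_nonneg ha ((hFmono.le_of_tendsto hF0 x).trans hx),
      min_eq_right hu1.le]
  · push Not at hle
    have hu : u ≤ 0 := by
      by_contra! hu
      obtain ⟨x, hx⟩ := (hF0.eventually (gt_mem_nhds hu)).exists
      exact (hle x).not_gt hx
    rw [powerLaw_Iic_of_nonpos hu, show F ⁻¹' Iic u = ∅ from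
      eq_empty_of_forall_notMem fun x hx => (hle x).not_ge hx, measure_empty]

end powerLaw

namespace ProbabilityTheory

variable {Ω : Type*} [MeasurableSpace Ω] {μ : Measure Ω}

lemma IndepFun.measure_preimage_prodMk_eq_lintegral {α β : Type*} [MeasurableSpace α]
    [MeasurableSpace β] [IsFiniteMeasure μ] {X : Ω → α} {Y : Ω → β} (hXY : IndepFun X Y μ)
    (hX : Measurable X) (hY : Measurable Y) {s : Set (α × β)} (hs : MeasurableSet s) :
    μ ((fun ω => (X ω, Y ω)) ⁻¹' s) = ∫⁻ x, μ (Y ⁻¹' (Prod.mk x ⁻¹' s)) ∂μ.map X := by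
  rw [← Measure.map_apply (hX.prodMk hY) hs,
    (indepFun_iff_map_prod_eq_prod_map_map hX.aemeasurable hY.aemeasurable).1 hXY,
    Measure.prod_apply hs]
  exact lintegral_congr fun x => Measure.map_apply hY (measurable_prodMk_left hs)

lemma iIndepFun.measure_forall_le {ι : Type*} {V : ι → Ω → ℝ} (hV : iIndepFun V μ)
    (S : Finset ι) (t : ℝ) :
    μ {ω | ∀ j : S, V j ω ≤ t} = ∏ j ∈ S, μ {ω | V j ω ≤ t} := by
  have hset : {ω | ∀ j : S, V j ω ≤ t} = ⋂ j ∈ S, V j ⁻¹' Iic t := by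
    ext ω
    simp
  rw [hset]
  exact hV.measure_inter_preimage_eq_mul S fun _ _ => measurableSet_Iic

lemma measure_forall_le_min_eq {ι : Type*} [Countable ι] [IsProbabilityMeasure μ] {X : Ω → ℝ}
    {Y : Ω → ι → ℝ} (hX : Measurable X) (hY : Measurable Y) (hXY : IndepFun X Y μ)
    {F : ℝ → ℝ} (hFmono : Monotone F) (hFcont : Continuous F)
    (hF0 : Tendsto F atBot (𝓝 0)) (hF1 : Tendsto F atTop (𝓝 1)) {a b : ℝ} (ha : 0 < a)
    (hb : 0 ≤ b) (hXcdf : ∀ v, μ {ω | X ω ≤ v} = ENNReal.ofReal (F v ^ a))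
    (hYcdf : ∀ t, μ {ω | ∀ j, Y ω j ≤ t} = ENNReal.ofReal (F t ^ b)) (w : ℝ) :
    μ {ω | ∀ j, Y ω j ≤ min w (X ω)} = ENNReal.ofReal (F w ^ b - b / (a + b) * F w ^ (a + b)) := by
  set s : Set (ℝ × (ι → ℝ)) := {p | ∀ j, p.2 j ≤ min w p.1}
  have hs : MeasurableSet s := by
    simp only [s, ofPred_forall]
    exact .iInter fun j => measurableSet_le (by fun_prop) (by fun_prop)
  have hlaw : (μ.map X).map F = powerLaw a := by
    have := Measure.isProbabilityMeasure_map (μ := μ) hX.aemeasurable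
    refine map_eq_powerLaw hFmono hFcont hF0 hF1 ha fun v => ?_
    rw [Measure.map_apply hX measurableSet_Iic]
    exact hXcdf v
  calc μ {ω | ∀ j, Y ω j ≤ min w (X ω)}
      = ∫⁻ x, μ (Y ⁻¹' (Prod.mk x ⁻¹' s)) ∂μ.map X :=
        hXY.measure_preimage_prodMk_eq_lintegral hX hY hs
    _ = ∫⁻ x, ENNReal.ofReal (min (F w) (F x) ^ b) ∂μ.map X :=
        lintegral_congr fun x => by rw [← hFmono.map_min]; exact hYcdf (min w x)
    _ = ∫⁻ u, ENNReal.ofReal (min (F w) u ^ b) ∂(μ.map X).map F :=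
        (lintegral_map (ENNReal.measurable_ofReal.comp
          ((measurable_const.min measurable_id).pow_const b)) hFcont.measurable).symm
    _ = ENNReal.ofReal (F w ^ b - b / (a + b) * F w ^ (a + b)) := by
        rw [hlaw, lintegral_ofReal_min_rpow_powerLaw ha hb (hFmono.le_of_tendsto hF0 w)
          (hFmono.ge_of_tendsto hF1 w)]

end ProbabilityTheory

theorem joint_winningBid_winner_cdf_power_asymmetry_general
    {Ω : Type*} [MeasurableSpace Ω] (μ : Measure Ω) [IsProbabilityMeasure μ]
    (N : ℕ) (l : Fin N → ℝ) (hl : ∀ i, 0 < l i)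
    (F : ℝ → ℝ) (hFmono : Monotone F) (hFcont : Continuous F)
    (hF0 : Filter.Tendsto F Filter.atBot (nhds 0))
    (hF1 : Filter.Tendsto F Filter.atTop (nhds 1))
    (V : Fin N → Ω → ℝ) (hVmeas : ∀ i, Measurable (V i))
    (hindep : iIndepFun V μ)
    (hcdf : ∀ i v, μ {ω | V i ω ≤ v} = ENNReal.ofReal ((F v) ^ (l i))) :
    ∀ i, ∀ w : ℝ,
      (μ {ω | ∀ j, j ≠ i → V j ω ≤ min w (V i ω)}).toReal
        = (F w) ^ ((∑ j, l j) - l i)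
          - (((∑ j, l j) - l i) / (∑ j, l j)) * (F w) ^ (∑ j, l j) := by
  intro i w
  set S := Finset.univ.erase i
  have hS : ∑ j ∈ S, l j = ∑ j, l j - l i := Finset.sum_erase_eq_sub (Finset.mem_univ i)
  have hb : 0 ≤ ∑ j ∈ S, l j := Finset.sum_nonneg fun j _ => (hl j).le
  have hFnn : ∀ x, 0 ≤ F x := hFmono.le_of_tendsto hF0
  have hindepS : IndepFun (V i) (fun ω (j : S) => V j ω) μ :=
    (hindep.indepFun_finset {i} S (by simp [S]) hVmeas).comp
      (measurable_pi_apply (⟨i, Finset.mem_singleton_self i⟩ : ({i} : Finset (Fin N))))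
      measurable_id
  have hcdfS : ∀ t, μ {ω | ∀ j : S, V j ω ≤ t} = ENNReal.ofReal (F t ^ ∑ j ∈ S, l j) := by
    intro t
    rw [hindep.measure_forall_le, Finset.prod_congr rfl fun j _ => hcdf j t,
      ← ENNReal.ofReal_prod_of_nonneg fun j _ => Real.rpow_nonneg (hFnn t) _,
      ← Real.rpow_sum_of_nonneg (hFnn t) fun j _ => (hl j).le]
  have hevent : {ω | ∀ j, j ≠ i → V j ω ≤ min w (V i ω)}
      = {ω | ∀ j : S, V j ω ≤ min w (V i ω)} := by
    ext ω
    simp [S]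
  rw [hevent, measure_forall_le_min_eq (hVmeas i) (by fun_prop) hindepS hFmono hFcont hF0 hF1
    (hl i) hb (hcdf i) hcdfS w, ENNReal.toReal_ofReal (rpow_sub_div_add_mul_rpow_add_nonneg (hl i)
    hb (hFnn w) (hFmono.ge_of_tendsto hF1 w)), hS, add_sub_cancel]

/-- Under the power asymmetry specification, for every bidder `i`
and every real `w`, the joint probability that the winning bid is at most `w` and
bidder `i` wins equals `F(w)^{Λ_{N|i}} − (Λ_{N|i}/Λ_N) · F(w)^{Λ_N}`, where
`Λ_N = λ_1 + ⋯ + λ_N` and `Λ_{N|i} = Λ_N − λ_i`. -/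
theorem joint_winningBid_winner_cdf_power_asymmetry
    {Ω : Type*} [MeasurableSpace Ω] (μ : Measure Ω) [IsProbabilityMeasure μ]
    (N : ℕ) (hN : 2 ≤ N) (l : Fin N → ℝ) (hl : ∀ i, 0 < l i)
    (F : ℝ → ℝ) (hFmono : Monotone F) (hFcont : Continuous F)
    (hF0 : Filter.Tendsto F Filter.atBot (nhds 0))
    (hF1 : Filter.Tendsto F Filter.atTop (nhds 1))
    (V : Fin N → Ω → ℝ) (hVmeas : ∀ i, Measurable (V i))
    (hindep : iIndepFun V μ)
    (hcdf : ∀ i v, μ {ω | V i ω ≤ v} = ENNReal.ofReal ((F v) ^ (l i))) :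
    ∀ i, ∀ w : ℝ,
      (μ {ω | ∀ j, j ≠ i → V j ω ≤ min w (V i ω)}).toReal
        = (F w) ^ ((∑ j, l j) - l i)
          - (((∑ j, l j) - l i) / (∑ j, l j)) * (F w) ^ (∑ j, l j) :=
  joint_winningBid_winner_cdf_power_asymmetry_general μ N l hl F hFmono hFcont hF0 hF1 V hVmeas
    hindep hcdf
end

section
/- Under the power asymmetry specification, the c.d.f. of the winning bid conditional on bidder i winning is Ψ_i ∘ F; that is, for every real w, P(max_{j≠i} V_j ≤ w | V_i > max_{j≠i} V_j) = Ψ_i(F(w)), where Ψ_i(τ) = (Λ_N · τ^{Λ_{N|i}} − Λ_{N|i} · τ^{Λ_N}) / λ_i. -/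
/-!
Let `M = max_{j ≠ i} V_j`. It is independent of `V_i` and has the continuous c.d.f.
`G = F ^ a` with `a = Λ_{N|i}`, while `V_i` has c.d.f. `F ^ λ_i = G ^ (λ_i / a)`. Conditioning on
`M`, `P(V_i ≤ M, M ≤ w) = ∫_{y ≤ w} G(y) ^ (λ_i / a) dG(y)`, and since `G(M)` is uniform on `(0, 1]`
(probability integral transform) this is `∫_0^{G(w)} t ^ (λ_i / a) dt = (a / Λ_N) F(w) ^ Λ_N`.
The same computation over all `y` gives `P(V_i ≤ M) = a / Λ_N`, hence `P(V_i > M) = λ_i / Λ_N` and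
`P(V_i > M, M ≤ w) = F(w) ^ a - (a / Λ_N) F(w) ^ Λ_N`; their ratio is `Ψ_i(F(w))`.
-/

open MeasureTheory ProbabilityTheory Set
open scoped ENNReal

theorem lintegral_Ioc_rpow {p c : ℝ} (hp : -1 < p) (hc : 0 ≤ c) :
    ∫⁻ t in Ioc 0 c, ENNReal.ofReal (t ^ p) = ENNReal.ofReal (c ^ (p + 1) / (p + 1)) := by
  have hint : IntegrableOn (fun t : ℝ => t ^ p) (Ioc 0 c) := by
    rw [← intervalIntegrable_iff_integrableOn_Ioc_of_le hc]
    exact intervalIntegral.intervalIntegrable_rpow' hp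
  rw [← ofReal_integral_eq_lintegral_ofReal hint
      ((ae_restrict_mem measurableSet_Ioc).mono fun t ht => Real.rpow_nonneg ht.1.le p),
    ← intervalIntegral.integral_of_le hc, integral_rpow (Or.inl hp),
    Real.zero_rpow (by linarith), sub_zero]

namespace ProbabilityTheory

section IntegralTransform

variable {ρ : Measure ℝ} [IsProbabilityMeasure ρ]

theorem cdf_preimage_Iic_cdf_ae_eq (hcont : Continuous (cdf ρ)) (u : ℝ) :
    cdf ρ ⁻¹' Iic (cdf ρ u) =ᵐ[ρ] Iic u := by
  set S := cdf ρ ⁻¹' Iic (cdf ρ u)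
  have hsub : Iic u ⊆ S := fun x hx => monotone_cdf ρ hx
  refine (ae_eq_of_subset_of_measure_ge hsub ?_ measurableSet_Iic.nullMeasurableSet
    (measure_ne_top ρ _)).symm
  rw [← ofReal_cdf]
  by_cases hbdd : BddAbove S
  · have hmem : sSup S ∈ S :=
      (isClosed_le hcont continuous_const).csSup_mem ⟨u, le_refl (cdf ρ u)⟩ hbdd
    calc ρ S ≤ ρ (Iic (sSup S)) := measure_mono fun x hx => le_csSup hbdd hx
      _ = ENNReal.ofReal (cdf ρ (sSup S)) := (ofReal_cdf ρ _).symm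
      _ ≤ ENNReal.ofReal (cdf ρ u) := ENNReal.ofReal_le_ofReal hmem
  · have hone : 1 ≤ cdf ρ u := by
      refine le_of_tendsto' (tendsto_cdf_atTop ρ) fun x => ?_
      obtain ⟨y, hy, hxy⟩ := not_bddAbove_iff.1 hbdd x
      exact (monotone_cdf ρ hxy.le).trans hy
    calc ρ S ≤ 1 := prob_le_one
      _ ≤ ENNReal.ofReal (cdf ρ u) := by simpa using ENNReal.ofReal_le_ofReal hone

theorem map_cdf_eq_volume_restrict_Ioc (hcont : Continuous (cdf ρ)) :
    ρ.map (cdf ρ) = volume.restrict (Ioc 0 1) := by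
  have : IsProbabilityMeasure (ρ.map (cdf ρ)) :=
    Measure.isProbabilityMeasure_map hcont.measurable.aemeasurable
  refine Measure.ext_of_Iic _ _ fun t => ?_
  rw [Measure.map_apply hcont.measurable measurableSet_Iic,
    Measure.restrict_apply' measurableSet_Ioc]
  by_cases ht : t ∈ range (cdf ρ)
  · obtain ⟨u, rfl⟩ := ht
    rw [measure_congr (cdf_preimage_Iic_cdf_ae_eq hcont u), ← ofReal_cdf,
      Iic_inter_Ioc_of_le (cdf_le_one ρ u), Real.volume_Ioc, sub_zero]
  -- by the intermediate value theorem, `t` lies strictly below or strictly above the range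
  rcases not_and_or.1 fun h => ht (mem_range_of_exists_le_of_exists_ge hcont h.1 h.2)
    with hlt | hgt
  · push Not at hlt
    have ht0 : t ≤ 0 := ge_of_tendsto' (tendsto_cdf_atBot ρ) fun x => (hlt x).le
    rw [show cdf ρ ⁻¹' Iic t = ∅ from eq_empty_of_forall_notMem fun x hx => (hlt x).not_ge hx,
      show Iic t ∩ Ioc 0 1 = ∅ from eq_empty_of_forall_notMem fun x hx => by
        linarith [mem_Iic.1 hx.1, hx.2.1], measure_empty, measure_empty]
  · push Not at hgt
    have ht1 : 1 ≤ t := le_of_tendsto' (tendsto_cdf_atTop ρ) fun x => (hgt x).le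
    rw [show cdf ρ ⁻¹' Iic t = univ from eq_univ_of_forall fun x => (hgt x).le,
      inter_eq_right.2 (Ioc_subset_Iic_self.trans (Iic_subset_Iic.2 ht1)), measure_univ,
      Real.volume_Ioc, sub_zero, ENNReal.ofReal_one]

theorem lintegral_comp_cdf (hcont : Continuous (cdf ρ)) {g : ℝ → ℝ≥0∞} (hg : Measurable g) :
    ∫⁻ x, g (cdf ρ x) ∂ρ = ∫⁻ t in Ioc 0 1, g t := by
  rw [← lintegral_map hg hcont.measurable, map_cdf_eq_volume_restrict_Ioc hcont]

theorem setLIntegral_Iic_comp_cdf (hcont : Continuous (cdf ρ)) {g : ℝ → ℝ≥0∞}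
    (hg : Measurable g) (u : ℝ) :
    ∫⁻ x in Iic u, g (cdf ρ x) ∂ρ = ∫⁻ t in Ioc 0 (cdf ρ u), g t := by
  rw [← setLIntegral_congr (cdf_preimage_Iic_cdf_ae_eq hcont u),
    ← setLIntegral_map measurableSet_Iic hg hcont.measurable, map_cdf_eq_volume_restrict_Ioc hcont,
    Measure.restrict_restrict measurableSet_Iic, Iic_inter_Ioc_of_le (cdf_le_one ρ u)]

end IntegralTransform

section TwoVariables

variable {Ω : Type*} [MeasurableSpace Ω] {μ : Measure Ω} {X Y : Ω → ℝ}

theorem IndepFun.measure_le_and_mem [IsFiniteMeasure μ] (hXY : IndepFun X Y μ)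
    (hX : Measurable X) (hY : Measurable Y) {s : Set ℝ} (hs : MeasurableSet s) :
    μ {ω | X ω ≤ Y ω ∧ Y ω ∈ s} = ∫⁻ y in s, μ {ω | X ω ≤ y} ∂(μ.map Y) := by
  have hS : MeasurableSet {p : ℝ × ℝ | p.1 ≤ p.2 ∧ p.2 ∈ s} :=
    (measurableSet_le measurable_fst measurable_snd).inter (measurable_snd hs)
  rw [← lintegral_indicator hs]
  calc μ {ω | X ω ≤ Y ω ∧ Y ω ∈ s}
      = μ.map (fun ω => (X ω, Y ω)) {p | p.1 ≤ p.2 ∧ p.2 ∈ s} :=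
        (Measure.map_apply (hX.prodMk hY) hS).symm
    _ = ∫⁻ y, μ.map X {x | x ≤ y ∧ y ∈ s} ∂(μ.map Y) := by
        rw [(indepFun_iff_map_prod_eq_prod_map_map hX.aemeasurable hY.aemeasurable).1 hXY,
          Measure.prod_apply_symm hS]
        rfl
    _ = _ := lintegral_congr fun y => by
        by_cases hy : y ∈ s
        · simp only [hy, and_true, indicator_of_mem]
          exact Measure.map_apply hX measurableSet_Iic
        · simp [hy]

variable [IsProbabilityMeasure μ]

theorem cdf_map_eq_of_measure_le (hY : Measurable Y) {G : ℝ → ℝ} (hG : ∀ y, 0 ≤ G y)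
    (hYcdf : ∀ y, μ {ω | Y ω ≤ y} = ENNReal.ofReal (G y)) : ⇑(cdf (μ.map Y)) = G := by
  have := Measure.isProbabilityMeasure_map (μ := μ) hY.aemeasurable
  funext y
  rw [cdf_eq_real, measureReal_def, Measure.map_apply hY measurableSet_Iic]
  exact (congrArg ENNReal.toReal (hYcdf y)).trans (ENNReal.toReal_ofReal (hG y))

theorem IndepFun.measure_le_and_le_of_cdf_rpow (hXY : IndepFun X Y μ)
    (hX : Measurable X) (hY : Measurable Y) (hcont : Continuous (cdf (μ.map Y)))
    {p : ℝ} (hp : 0 < p) (hXcdf : ∀ x, μ {ω | X ω ≤ x} = ENNReal.ofReal (cdf (μ.map Y) x ^ p))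
    (w : ℝ) :
    μ {ω | X ω ≤ Y ω ∧ Y ω ≤ w}
      = ENNReal.ofReal (cdf (μ.map Y) w ^ (p + 1) / (p + 1)) := by
  have := Measure.isProbabilityMeasure_map (μ := μ) hY.aemeasurable
  calc μ {ω | X ω ≤ Y ω ∧ Y ω ≤ w}
      = ∫⁻ y in Iic w, ENNReal.ofReal (cdf (μ.map Y) y ^ p) ∂(μ.map Y) := by
        simp_rw [← hXcdf]; exact hXY.measure_le_and_mem hX hY measurableSet_Iic
    _ = _ := by
        rw [setLIntegral_Iic_comp_cdf hcont (g := fun t => ENNReal.ofReal (t ^ p))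
          (by fun_prop) w, lintegral_Ioc_rpow (by linarith) (cdf_nonneg _ w)]

theorem IndepFun.measure_le_of_cdf_rpow (hXY : IndepFun X Y μ)
    (hX : Measurable X) (hY : Measurable Y) (hcont : Continuous (cdf (μ.map Y)))
    {p : ℝ} (hp : 0 < p) (hXcdf : ∀ x, μ {ω | X ω ≤ x} = ENNReal.ofReal (cdf (μ.map Y) x ^ p)) :
    μ {ω | X ω ≤ Y ω} = ENNReal.ofReal (1 / (p + 1)) := by
  have := Measure.isProbabilityMeasure_map (μ := μ) hY.aemeasurable
  calc μ {ω | X ω ≤ Y ω}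
      = ∫⁻ y, ENNReal.ofReal (cdf (μ.map Y) y ^ p) ∂(μ.map Y) := by
        simpa only [mem_univ, and_true, Measure.restrict_univ, hXcdf]
          using hXY.measure_le_and_mem hX hY MeasurableSet.univ
    _ = _ := by
        rw [lintegral_comp_cdf hcont (g := fun t => ENNReal.ofReal (t ^ p)) (by fun_prop),
          lintegral_Ioc_rpow (by linarith) zero_le_one, Real.one_rpow]

theorem IndepFun.toReal_cond_lt_setOf_le_of_cdf_rpow (hXY : IndepFun X Y μ)
    (hX : Measurable X) (hY : Measurable Y) {F : ℝ → ℝ} (hF : Continuous F)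
    (hF_nonneg : ∀ x, 0 ≤ F x) {p q : ℝ} (hp : 0 < p) (hq : 0 < q)
    (hXcdf : ∀ x, μ {ω | X ω ≤ x} = ENNReal.ofReal (F x ^ p))
    (hYcdf : ∀ y, μ {ω | Y ω ≤ y} = ENNReal.ofReal (F y ^ q)) (w : ℝ) :
    (cond μ {ω | Y ω < X ω} {ω | Y ω ≤ w}).toReal
      = ((p + q) * F w ^ q - q * F w ^ (p + q)) / p := by
  have hcdfY := cdf_map_eq_of_measure_le hY (fun y => Real.rpow_nonneg (hF_nonneg y) q) hYcdf
  have hXcdf' : ∀ x, μ {ω | X ω ≤ x} = ENNReal.ofReal (cdf (μ.map Y) x ^ (p / q)) := fun x => by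
    rw [hcdfY, ← Real.rpow_mul (hF_nonneg x), mul_div_cancel₀ p hq.ne', hXcdf]
  have hcont : Continuous (cdf (μ.map Y)) := by
    rw [hcdfY]; exact hF.rpow_const fun _ => Or.inr hq.le
  have hLose := hXY.measure_le_of_cdf_rpow hX hY hcont (div_pos hp hq) hXcdf'
  have hLoseBelow := hXY.measure_le_and_le_of_cdf_rpow hX hY hcont (div_pos hp hq) hXcdf' w
  have hpq : p / q + 1 = (p + q) / q := by field_simp
  rw [hcdfY, ← Real.rpow_mul (hF_nonneg w), hpq, mul_div_cancel₀ _ hq.ne'] at hLoseBelow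
  have hmeasLose : MeasurableSet {ω | X ω ≤ Y ω} := measurableSet_le hX hY
  have hmeasB : MeasurableSet {ω | Y ω ≤ w} := hY measurableSet_Iic
  have hmeasLoseB : MeasurableSet {ω | X ω ≤ Y ω ∧ Y ω ≤ w} := hmeasLose.inter hmeasB
  have hWin : {ω | Y ω < X ω} = {ω | X ω ≤ Y ω}ᶜ := by ext; simp
  have hWinB : {ω | Y ω < X ω} ∩ {ω | Y ω ≤ w}
      = {ω | Y ω ≤ w} \ {ω | X ω ≤ Y ω ∧ Y ω ≤ w} := by
    ext ω
    simp only [mem_inter_iff, Set.mem_sdiff, mem_ofPred_eq]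
    exact ⟨fun h => ⟨h.2, fun h' => h'.1.not_gt h.1⟩,
      fun h => ⟨lt_of_not_ge fun h' => h.2 ⟨h', h.1⟩, h.1⟩⟩
  rw [cond_apply' hmeasB, ENNReal.toReal_mul, ENNReal.toReal_inv, ← measureReal_def,
    ← measureReal_def, hWinB, measureReal_sdiff (s₁ := {ω | Y ω ≤ w}) (fun _ h => h.2) hmeasLoseB,
    hWin, measureReal_compl hmeasLose, probReal_univ]
  have hτ := Real.rpow_nonneg (hF_nonneg w)
  simp only [measureReal_def, hLose, hLoseBelow, hYcdf]
  rw [ENNReal.toReal_ofReal (by positivity),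
    ENNReal.toReal_ofReal (div_nonneg (hτ _) (by positivity)), ENNReal.toReal_ofReal (hτ _), hpq,
    show 1 - 1 / ((p + q) / q) = p / (p + q) by field_simp; ring]
  field_simp

end TwoVariables

section FinsetSup

variable {Ω ι : Type*} [MeasurableSpace Ω] {μ : Measure Ω}

theorem iIndepFun.indepFun_finset_sup'_of_notMem {β : Type*} [MeasurableSpace β]
    [SemilatticeSup β] [MeasurableSup₂ β] {f : ι → Ω → β} (hf_indep : iIndepFun f μ)
    (hf_meas : ∀ i, Measurable (f i)) {s : Finset ι} (hs : s.Nonempty) {i : ι} (hi : i ∉ s) :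
    IndepFun (s.sup' hs f) (f i) μ := by
  have h_left :
      s.sup' hs f = (s.attach.sup' hs.attach fun j p => p j) ∘ fun ω (j : s) => f j ω := by
    ext ω
    simp only [Finset.sup'_apply, Function.comp_apply]
    exact le_antisymm
      (Finset.sup'_le _ _ fun j hj =>
        Finset.le_sup' (fun x : s => f x ω) (Finset.mem_attach s ⟨j, hj⟩))
      (Finset.sup'_le _ _ fun j _ => Finset.le_sup' (fun a => f a ω) j.2)
  rw [h_left]
  exact (hf_indep.indepFun_finset s {i} (Finset.disjoint_singleton_right.2 hi) hf_meas).comp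
    (Finset.measurable_sup' _ fun j _ => measurable_pi_apply j)
    (measurable_pi_apply ⟨i, Finset.mem_singleton_self i⟩)

theorem iIndepFun.measure_finset_sup'_le {f : ι → Ω → ℝ} (hf_indep : iIndepFun f μ)
    {s : Finset ι} (hs : s.Nonempty) (x : ℝ) :
    μ {ω | s.sup' hs f ω ≤ x} = ∏ j ∈ s, μ {ω | f j ω ≤ x} := by
  have : {ω | s.sup' hs f ω ≤ x} = ⋂ j ∈ s, f j ⁻¹' Iic x := by
    ext ω; simp [Finset.sup'_apply, Finset.sup'_le_iff]
  rw [this, hf_indep.meas_biInter fun j _ => ⟨Iic x, measurableSet_Iic, rfl⟩]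
  rfl

end FinsetSup

end ProbabilityTheory

theorem conditional_winningBid_cdf_power_asymmetry_general
    {Ω : Type*} [MeasurableSpace Ω] (μ : Measure Ω) [IsProbabilityMeasure μ]
    (N : ℕ) (hN : 2 ≤ N) (l : Fin N → ℝ) (hl : ∀ i, 0 < l i)
    (F : ℝ → ℝ) (hFmono : Monotone F) (hFcont : Continuous F)
    (hF0 : Filter.Tendsto F Filter.atBot (nhds 0))
    (V : Fin N → Ω → ℝ) (hVmeas : ∀ i, Measurable (V i))
    (hindep : iIndepFun V μ)
    (hcdf : ∀ i v, μ {ω | V i ω ≤ v} = ENNReal.ofReal ((F v) ^ (l i)))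
    (Ψ : Fin N → ℝ → ℝ)
    (hΨ : ∀ i τ, Ψ i τ = ((∑ j, l j) * τ ^ ((∑ j, l j) - l i)
        - ((∑ j, l j) - l i) * τ ^ (∑ j, l j)) / l i) :
    ∀ i, ∀ w : ℝ,
      (ProbabilityTheory.cond μ {ω | ∀ j, j ≠ i → V j ω < V i ω}
          {ω | ∀ j, j ≠ i → V j ω ≤ w}).toReal
        = Ψ i (F w) := by
  intro i w
  set T := Finset.univ.erase i
  have hT : T.Nonempty := by
    have := Fin.nontrivial_iff_two_le.2 hN
    obtain ⟨j, hj⟩ := exists_ne i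
    exact ⟨j, Finset.mem_erase.2 ⟨hj, Finset.mem_univ j⟩⟩
  have hF_nonneg : ∀ x, 0 ≤ F x := hFmono.le_of_tendsto hF0
  have hMcdf : ∀ y, μ {ω | T.sup' hT V ω ≤ y} = ENNReal.ofReal (F y ^ ∑ j ∈ T, l j) := fun y => by
    rw [hindep.measure_finset_sup'_le hT, Finset.prod_congr rfl fun j _ => hcdf j y,
      ← ENNReal.ofReal_prod_of_nonneg fun j _ => Real.rpow_nonneg (hF_nonneg y) _,
      ← Real.rpow_sum_of_nonneg (hF_nonneg y) fun j _ => (hl j).le]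
  have hWin : {ω | ∀ j, j ≠ i → V j ω < V i ω} = {ω | T.sup' hT V ω < V i ω} := by
    ext; simp [T, Finset.sup'_apply, Finset.sup'_lt_iff]
  have hBid : {ω | ∀ j, j ≠ i → V j ω ≤ w} = {ω | T.sup' hT V ω ≤ w} := by
    ext; simp [T, Finset.sup'_apply, Finset.sup'_le_iff]
  rw [hWin, hBid, (hindep.indepFun_finset_sup'_of_notMem hVmeas hT
    (Finset.notMem_erase i _)).symm.toReal_cond_lt_setOf_le_of_cdf_rpow (hVmeas i)
    (Finset.measurable_sup' hT fun j _ => hVmeas j) hFcont hF_nonneg (hl i)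
    (Finset.sum_pos (fun j _ => hl j) hT) (hcdf i) hMcdf w,
    hΨ, Finset.sum_erase_eq_sub (Finset.mem_univ i), add_sub_cancel]

/-- Under the power asymmetry specification, the c.d.f. of the
winning bid conditional on bidder `i` winning is `Ψ_i ∘ F`: for every real `w`,
`P(max_{j≠i} V_j ≤ w | V_i > max_{j≠i} V_j) = Ψ_i(F(w))` where
`Ψ_i(τ) = (Λ_N τ^{Λ_{N|i}} − Λ_{N|i} τ^{Λ_N}) / λ_i`. -/
theorem conditional_winningBid_cdf_power_asymmetry
    {Ω : Type*} [MeasurableSpace Ω] (μ : Measure Ω) [IsProbabilityMeasure μ]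
    (N : ℕ) (hN : 2 ≤ N) (l : Fin N → ℝ) (hl : ∀ i, 0 < l i)
    (F : ℝ → ℝ) (hFmono : Monotone F) (hFcont : Continuous F)
    (hF0 : Filter.Tendsto F Filter.atBot (nhds 0))
    (hF1 : Filter.Tendsto F Filter.atTop (nhds 1))
    (V : Fin N → Ω → ℝ) (hVmeas : ∀ i, Measurable (V i))
    (hindep : iIndepFun V μ)
    (hcdf : ∀ i v, μ {ω | V i ω ≤ v} = ENNReal.ofReal ((F v) ^ (l i)))
    (Ψ : Fin N → ℝ → ℝ)
    (hΨ : ∀ i τ, Ψ i τ = ((∑ j, l j) * τ ^ ((∑ j, l j) - l i)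
        - ((∑ j, l j) - l i) * τ ^ (∑ j, l j)) / l i) :
    ∀ i, ∀ w : ℝ,
      (ProbabilityTheory.cond μ {ω | ∀ j, j ≠ i → V j ω < V i ω}
          {ω | ∀ j, j ≠ i → V j ω ≤ w}).toReal
        = Ψ i (F w) :=
  conditional_winningBid_cdf_power_asymmetry_general μ N hN l hl F hFmono hFcont hF0 V hVmeas hindep
    hcdf Ψ hΨ
end

section
/- Under the power asymmetry specification, the c.d.f. of the second-highest order statistic V_{N−1:N} is, for every real v, P(V_{N−1:N} ≤ v) = (1 − N) F(v)^{Λ_N} + Σ_{i=1}^{N} F(v)^{Λ_{N|i}}. -/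
/-!
`V_{N−1:N} ≤ v` holds iff for some `i` all `V_j` with `j ≠ i` are `≤ v`, so the event is the union
of the events `C_i = {V_j ≤ v for all j ≠ i}`. Any two distinct `C_i` intersect exactly in
`B = {V_j ≤ v for all j}`, which therefore is counted `N` times in `∑ P(C_i)` but only once in
the union: `P(V_{N−1:N} ≤ v) = ∑ P(C_i) − (N − 1) P(B)`. By independence and `F_j = F^{λ_j}`,
`P(C_i) = F(v)^{Λ_{N|i}}` and `P(B) = F(v)^{Λ_N}`.
-/

open MeasureTheory ProbabilityTheory

/-- The second-highest value among `v 1, …, v N` (for `N ≥ 2`): it equals the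
maximum over pairs `i ≠ j` of `min (v i) (v j)`. -/
noncomputable def secondMax {N : ℕ} (v : Fin N → ℝ) : ℝ :=
  sSup {x | ∃ i j, i ≠ j ∧ x = min (v i) (v j)}

open Set

theorem secondMax_le_iff {N : ℕ} (hN : 2 ≤ N) (w : Fin N → ℝ) (v : ℝ) :
    secondMax w ≤ v ↔ ∀ i j, i ≠ j → min (w i) (w j) ≤ v := by
  have hfin : {x | ∃ i j, i ≠ j ∧ x = min (w i) (w j)}.Finite :=
    (finite_range fun p : Fin N × Fin N => min (w p.1) (w p.2)).subset
      fun x ⟨i, j, _, hx⟩ => ⟨(i, j), hx.symm⟩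
  have hne : {x | ∃ i j, i ≠ j ∧ x = min (w i) (w j)}.Nonempty :=
    ⟨_, ⟨0, by omega⟩, ⟨1, by omega⟩, by simp [Fin.ext_iff], rfl⟩
  rw [secondMax, csSup_le_iff hfin.bddAbove hne]
  exact ⟨fun h i j hij => h _ ⟨i, j, hij, rfl⟩, fun h _ ⟨i, j, hij, hx⟩ => hx ▸ h i j hij⟩

theorem secondMax_le_iff_exists {N : ℕ} (hN : 2 ≤ N) (w : Fin N → ℝ) (v : ℝ) :
    secondMax w ≤ v ↔ ∃ i, ∀ j, j ≠ i → w j ≤ v := by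
  rw [secondMax_le_iff hN]
  constructor
  · intro h
    by_cases hall : ∀ j, w j ≤ v
    · exact ⟨⟨0, by omega⟩, fun j _ => hall j⟩
    · push Not at hall
      obtain ⟨i, hi⟩ := hall
      exact ⟨i, fun j hji => (min_le_iff.mp (h i j hji.symm)).resolve_left hi.not_ge⟩
  · rintro ⟨k, hk⟩ i j hij
    rcases eq_or_ne i k with rfl | hik
    · exact (min_le_right _ _).trans (hk j hij.symm)
    · exact (min_le_left _ _).trans (hk i hik)

theorem biInter_erase_inter_biInter_erase_subset {α ι : Type*} [DecidableEq ι] {s : Finset ι}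
    {A : ι → Set α} {i k : ι} (hik : i ≠ k) :
    (⋂ j ∈ s.erase i, A j) ∩ (⋂ j ∈ s.erase k, A j) ⊆ ⋂ j ∈ s, A j := by
  rintro x ⟨hi, hk⟩
  simp only [mem_iInter₂, Finset.mem_erase] at hi hk ⊢
  intro j hj
  rcases eq_or_ne j i with rfl | hji
  · exact hk j ⟨hik, hj⟩
  · exact hi j ⟨hji, hj⟩

theorem measureReal_iUnion_of_pairwise_inter_subset {Ω ι : Type*} [MeasurableSpace Ω]
    [Fintype ι] [Nonempty ι] (μ : Measure Ω) [IsFiniteMeasure μ] {C : ι → Set Ω} {B : Set Ω}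
    (hC : ∀ i, MeasurableSet (C i)) (hB : MeasurableSet B) (hBC : ∀ i, B ⊆ C i)
    (hCC : Pairwise fun i j => C i ∩ C j ⊆ B) :
    μ.real (⋃ i, C i) = ∑ i, μ.real (C i) - (Fintype.card ι - 1) * μ.real B := by
  have hunion : ⋃ i, C i = B ∪ ⋃ i, (C i \ B) := by
    rw [← iUnion_sdiff,
      union_sdiff_cancel ((hBC (Classical.arbitrary ι)).trans (subset_iUnion C _))]
  have hdisj : Pairwise (Function.onFun Disjoint fun i => C i \ B) := by
    intro i j hij
    rw [Function.onFun, disjoint_left]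
    rintro ω ⟨hi, hiB⟩ ⟨hj, -⟩
    exact hiB (hCC hij ⟨hi, hj⟩)
  rw [hunion, measureReal_union (disjoint_iUnion_right.2 fun _ => disjoint_sdiff_right)
      (MeasurableSet.iUnion fun i => (hC i).diff hB),
    measureReal_iUnion_fintype hdisj fun i => (hC i).diff hB]
  have hsdiff : ∀ i, μ.real (C i \ B) = μ.real (C i) - μ.real B := fun i =>
    measureReal_sdiff (hBC i) hB
  simp only [hsdiff, Finset.sum_sub_distrib, Finset.sum_const,
    Finset.card_univ, nsmul_eq_mul]
  ring

theorem ProbabilityTheory.iIndepFun.measureReal_biInter_preimage {Ω ι : Type*}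
    [MeasurableSpace Ω] {μ : Measure Ω} {β : ι → Type*} [∀ i, MeasurableSpace (β i)]
    {f : ∀ i, Ω → β i} (hf : iIndepFun f μ) (S : Finset ι) {sets : ∀ i, Set (β i)}
    (hsets : ∀ i ∈ S, MeasurableSet (sets i)) :
    μ.real (⋂ i ∈ S, f i ⁻¹' sets i) = ∏ i ∈ S, μ.real (f i ⁻¹' sets i) := by
  simp only [Measure.real, hf.measure_inter_preimage_eq_mul S hsets, ENNReal.toReal_prod]

theorem secondMax_cdf_power_asymmetry_general
    {Ω : Type*} [MeasurableSpace Ω] (μ : Measure Ω) [IsProbabilityMeasure μ]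
    (N : ℕ) (hN : 2 ≤ N) (l : Fin N → ℝ) (hl : ∀ i, 0 < l i)
    (F : ℝ → ℝ) (hFmono : Monotone F)
    (hF0 : Filter.Tendsto F Filter.atBot (nhds 0))
    (V : Fin N → Ω → ℝ) (hVmeas : ∀ i, Measurable (V i))
    (hindep : iIndepFun V μ)
    (hcdf : ∀ i v, μ {ω | V i ω ≤ v} = ENNReal.ofReal ((F v) ^ (l i))) :
    ∀ v : ℝ,
      (μ {ω | secondMax (fun i => V i ω) ≤ v}).toReal
        = (1 - (N:ℝ)) * (F v) ^ (∑ j, l j) + ∑ i, (F v) ^ ((∑ j, l j) - l i) := by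
  intro v
  have : Nonempty (Fin N) := ⟨⟨0, by omega⟩⟩
  have hFv : 0 ≤ F v := hFmono.le_of_tendsto hF0 v
  set A : Fin N → Set Ω := fun j => V j ⁻¹' Iic v
  have hA : ∀ j, MeasurableSet (A j) := fun j => hVmeas j measurableSet_Iic
  have hinter : ∀ S : Finset (Fin N), μ.real (⋂ j ∈ S, A j) = F v ^ ∑ j ∈ S, l j := by
    intro S
    rw [hindep.measureReal_biInter_preimage S fun _ _ => measurableSet_Iic,
      Real.rpow_sum_of_nonneg hFv fun j _ => (hl j).le]
    exact Finset.prod_congr rfl fun j _ => (congrArg ENNReal.toReal (hcdf j v)).trans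
      (ENNReal.toReal_ofReal (Real.rpow_nonneg hFv _))
  have hevent : {ω | secondMax (fun i => V i ω) ≤ v} = ⋃ i, ⋂ j ∈ Finset.univ.erase i, A j := by
    ext ω
    simp [A, secondMax_le_iff_exists hN]
  change μ.real _ = _
  rw [hevent, measureReal_iUnion_of_pairwise_inter_subset μ
      (fun i => Finset.measurableSet_biInter _ fun j _ => hA j)
      (Finset.measurableSet_biInter _ fun j _ => hA j)
      (fun i => biInter_subset_biInter_left fun j _ => Finset.mem_univ j)
      fun _ _ hik => biInter_erase_inter_biInter_erase_subset hik]
  simp only [hinter, Finset.sum_erase_eq_sub (Finset.mem_univ _), Fintype.card_fin]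
  ring

/-- Under the power asymmetry specification, the c.d.f. of the
second-highest order statistic is
`P(V_{N−1:N} ≤ v) = (1 − N) F(v)^{Λ_N} + Σ_i F(v)^{Λ_{N|i}}`. -/
theorem secondMax_cdf_power_asymmetry
    {Ω : Type*} [MeasurableSpace Ω] (μ : Measure Ω) [IsProbabilityMeasure μ]
    (N : ℕ) (hN : 2 ≤ N) (l : Fin N → ℝ) (hl : ∀ i, 0 < l i)
    (F : ℝ → ℝ) (hFmono : Monotone F) (hFcont : Continuous F)
    (hF0 : Filter.Tendsto F Filter.atBot (nhds 0))
    (hF1 : Filter.Tendsto F Filter.atTop (nhds 1))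
    (V : Fin N → Ω → ℝ) (hVmeas : ∀ i, Measurable (V i))
    (hindep : iIndepFun V μ)
    (hcdf : ∀ i v, μ {ω | V i ω ≤ v} = ENNReal.ofReal ((F v) ^ (l i))) :
    ∀ v : ℝ,
      (μ {ω | secondMax (fun i => V i ω) ≤ v}).toReal
        = (1 - (N:ℝ)) * (F v) ^ (∑ j, l j) + ∑ i, (F v) ^ ((∑ j, l j) - l i) :=
  secondMax_cdf_power_asymmetry_general μ N hN l hl F hFmono hF0 V hVmeas hindep hcdf
end

section
/- The seller's expected payoff equals the quantile formula: E[π(r)] = V_0 · r^{Λ_N} + V(r) · Σ_{i=1}^{N} r^{Λ_{N|i}} (1 − r^{λ_i}) + ∫_r^1 V(t) · [ (1 − N) Λ_N t^{Λ_N − 1} + Σ_{i=1}^{N} Λ_{N|i} t^{Λ_{N|i} − 1} ] dt. -/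
/-!
Write `W i = U i ^ (1 / λ i)`, so that `P(W i ≤ t) = t ^ λ i` on `[0, 1]`, and let `S` be the
second-highest of the `W i`. Since `V` is strictly increasing, the payoff equals `V₀ - V r` on
`{max W < r}`, plus `V r` on `{S < r}`, plus `V S` on `{r ≤ S}`. By independence, `S ≤ c` is the
event that at most one `W i` exceeds `c`, of probability
`G c = ∑ i, c ^ Λ_{N|i} - (N - 1) c ^ Λ_N`; so the law of `S` has density `G'` on `(0, 1]`, which
is the bracket in the integrand.
-/

open MeasureTheory ProbabilityTheory

open Set

section SecondMax

variable {N : ℕ}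

theorem finite_setOf_min_pairs (v : Fin N → ℝ) :
    {x | ∃ i j, i ≠ j ∧ x = min (v i) (v j)}.Finite :=
  (finite_range fun p : Fin N × Fin N => min (v p.1) (v p.2)).subset
    fun _ ⟨i, j, _, hx⟩ => ⟨(i, j), hx.symm⟩

theorem exists_secondMax_eq_min (hN : 2 ≤ N) (v : Fin N → ℝ) :
    ∃ i j, i ≠ j ∧ secondMax v = min (v i) (v j) :=
  Set.Nonempty.csSup_mem (s := {x | ∃ i j, i ≠ j ∧ x = min (v i) (v j)})
    ⟨_, ⟨0, by omega⟩, ⟨1, by omega⟩, by simp [Fin.ext_iff], rfl⟩ (finite_setOf_min_pairs v)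

theorem min_le_secondMax (v : Fin N → ℝ) {i j : Fin N} (hij : i ≠ j) :
    min (v i) (v j) ≤ secondMax v :=
  le_csSup (finite_setOf_min_pairs v).bddAbove ⟨i, j, hij, rfl⟩

theorem secondMax_mem_iff (hN : 2 ≤ N) {s : Set ℝ} (hs : IsLowerSet s) (v : Fin N → ℝ) :
    secondMax v ∈ s ↔ ∃ i, ∀ j ≠ i, v j ∈ s := by
  constructor
  · intro h
    by_contra! hc
    obtain ⟨j, -, hj⟩ := hc ⟨0, by omega⟩
    obtain ⟨k, hkj, hk⟩ := hc j
    have := hs (min_le_secondMax v hkj) h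
    rcases min_choice (v k) (v j) with hm | hm <;> rw [hm] at this <;> contradiction
  · rintro ⟨i, hi⟩
    obtain ⟨j, k, hjk, heq⟩ := exists_secondMax_eq_min hN v
    rw [heq]
    by_cases hj : j = i
    · exact hs (min_le_right _ _) (hi k (hj ▸ hjk.symm))
    · exact hs (min_le_left _ _) (hi j hj)

theorem secondMax_mem_of_forall_mem (hN : 2 ≤ N) {s : Set ℝ} {v : Fin N → ℝ}
    (hv : ∀ i, v i ∈ s) : secondMax v ∈ s := by
  obtain ⟨i, j, -, heq⟩ := exists_secondMax_eq_min hN v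
  rw [heq]
  rcases min_choice (v i) (v j) with h | h <;> rw [h] <;> apply hv

theorem secondMax_comp_of_monotoneOn (hN : 2 ≤ N) {f : ℝ → ℝ} {s : Set ℝ} (hf : MonotoneOn f s)
    {v : Fin N → ℝ} (hv : ∀ i, v i ∈ s) : secondMax (fun i => f (v i)) = f (secondMax v) := by
  obtain ⟨i, j, hij, hv_eq⟩ := exists_secondMax_eq_min hN v
  obtain ⟨k, m, hkm, hfv_eq⟩ := exists_secondMax_eq_min hN fun i => f (v i)
  have hmem := secondMax_mem_of_forall_mem hN hv
  apply le_antisymm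
  · rw [hfv_eq, ← hf.map_min (hv k) (hv m)]
    exact hf (min_rec' s (hv k) (hv m)) hmem (min_le_secondMax v hkm)
  · rw [hv_eq, hf.map_min (hv i) (hv j)]
    exact min_le_secondMax (fun i => f (v i)) hij

end SecondMax

section Independence

variable {Ω ι β : Type*} [MeasurableSpace Ω] [MeasurableSpace β] {μ : Measure Ω} [Fintype ι]
  {X : ι → Ω → β} {s : ι → Set β}

theorem ProbabilityTheory.iIndepFun.measureReal_forall_mem (hX : iIndepFun X μ)
    (hs : ∀ i, MeasurableSet (s i)) :
    μ.real {ω | ∀ i, X i ω ∈ s i} = ∏ i, μ.real (X i ⁻¹' s i) := by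
  have hset : {ω | ∀ i, X i ω ∈ s i} = ⋂ i ∈ Finset.univ, X i ⁻¹' s i := by ext; simp
  rw [hset, measureReal_def, hX.measure_inter_preimage_eq_mul _ fun i _ => hs i,
    ENNReal.toReal_prod]
  rfl

theorem ProbabilityTheory.iIndepFun.measureReal_exists_forall_ne_mem [IsProbabilityMeasure μ]
    [DecidableEq ι] [Nonempty ι] (hX : iIndepFun X μ) (hXm : ∀ i, Measurable (X i))
    (hs : ∀ i, MeasurableSet (s i)) :
    μ.real {ω | ∃ i, ∀ j ≠ i, X j ω ∈ s j}
      = ∏ j, μ.real (X j ⁻¹' s j)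
        + ∑ i, (1 - μ.real (X i ⁻¹' s i)) * ∏ j ∈ Finset.univ.erase i, μ.real (X j ⁻¹' s j) := by
  set t : ι → ι → Set β := fun i => Function.update s i (s i)ᶜ
  have ht : ∀ i j, MeasurableSet (t i j) := fun i j => by
    by_cases h : j = i
    · subst h; simpa [t] using (hs j).compl
    · simpa [t, h] using hs j
  have hsplit : {ω | ∃ i, ∀ j ≠ i, X j ω ∈ s j}
      = {ω | ∀ j, X j ω ∈ s j} ∪ ⋃ i, {ω | ∀ j, X j ω ∈ t i j} := by
    ext ω
    simp only [mem_ofPred_eq, mem_union, mem_iUnion, t, Function.update_apply]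
    constructor
    · rintro ⟨i, hi⟩
      by_cases hXi : X i ω ∈ s i
      · exact Or.inl fun j => by by_cases h : j = i <;> simp_all
      · exact Or.inr ⟨i, fun j => by by_cases h : j = i <;> simp_all⟩
    · rintro (h | ⟨i, hi⟩)
      · exact ⟨Classical.arbitrary ι, fun j _ => h j⟩
      · exact ⟨i, fun j hj => by simpa [hj] using hi j⟩
  have hdisj : Disjoint {ω | ∀ j, X j ω ∈ s j} (⋃ i, {ω | ∀ j, X j ω ∈ t i j}) := by
    refine disjoint_iUnion_right.mpr fun i => disjoint_left.mpr fun ω h h' => ?_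
    exact (by simpa [t] using h' i : X i ω ∉ s i) (h i)
  have hpair : Pairwise (Function.onFun Disjoint fun i => {ω | ∀ j, X j ω ∈ t i j}) := by
    intro i k hik
    refine disjoint_left.mpr fun ω h h' => ?_
    exact (by simpa [t] using h i : X i ω ∉ s i) (by simpa [t, hik] using h' i)
  have hmeas : ∀ i, MeasurableSet {ω | ∀ j, X j ω ∈ t i j} := fun i => by
    rw [ofPred_forall]; exact MeasurableSet.iInter fun j => hXm j (ht i j)
  rw [hsplit, measureReal_union hdisj (MeasurableSet.iUnion hmeas),
    measureReal_iUnion_fintype hpair hmeas, hX.measureReal_forall_mem hs]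
  congr 1
  refine Finset.sum_congr rfl fun i _ => ?_
  rw [hX.measureReal_forall_mem (ht i)]
  simp only [t, Function.apply_update (fun j (a : Set β) => μ.real (X j ⁻¹' a))]
  rw [Finset.prod_update_of_mem (Finset.mem_univ i), Finset.sdiff_singleton_eq_erase,
    preimage_compl, measureReal_compl (hXm i (hs i)), probReal_univ]

end Independence

section SecondMaxDistribution

variable {N : ℕ} {l : Fin N → ℝ}

-- The CDF on `[0, 1]` of the second-highest of independent `W i` with `P(W i ≤ c) = c ^ l i`.
variable (l) in
noncomputable def secondMaxCdf (c : ℝ) : ℝ :=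
  ∑ i, c ^ (∑ j, l j - l i) - ((N : ℝ) - 1) * c ^ ∑ j, l j

variable (l) in
noncomputable def secondMaxPdf (t : ℝ) : ℝ :=
  (1 - (N : ℝ)) * (∑ j, l j) * t ^ (∑ j, l j - 1)
    + ∑ i, (∑ j, l j - l i) * t ^ (∑ j, l j - l i - 1)

theorem sum_sub_pos_of_two_le (hN : 2 ≤ N) (hl : ∀ i, 0 < l i) (i : Fin N) :
    0 < ∑ j, l j - l i := by
  have : Nontrivial (Fin N) := Fin.nontrivial_iff_two_le.mpr hN
  rw [← Finset.sum_erase_eq_sub (Finset.mem_univ i)]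
  exact Finset.sum_pos (fun j _ => hl j) Finset.univ_nontrivial.erase_nonempty

theorem sum_pos_of_two_le (hN : 2 ≤ N) (hl : ∀ i, 0 < l i) : 0 < ∑ j, l j := by
  linarith [sum_sub_pos_of_two_le hN hl ⟨0, by omega⟩, hl ⟨0, by omega⟩]

theorem add_sum_eq_secondMaxCdf (hl : ∀ i, 0 < l i) {c : ℝ} (hc : 0 ≤ c) :
    c ^ ∑ j, l j + ∑ i, (1 - c ^ l i) * c ^ (∑ j, l j - l i) = secondMaxCdf l c := by
  have hterm : ∀ i,
      (1 - c ^ l i) * c ^ (∑ j, l j - l i) = c ^ (∑ j, l j - l i) - c ^ ∑ j, l j := by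
    intro i
    have hpos : 0 < ∑ j, l j :=
      (hl i).trans_le (Finset.single_le_sum (fun j _ => (hl j).le) (Finset.mem_univ i))
    rw [sub_mul, one_mul, ← Real.rpow_add' hc (by rw [add_sub_cancel]; exact hpos.ne'),
      add_sub_cancel]
  rw [secondMaxCdf, Finset.sum_congr rfl fun i _ => hterm i, Finset.sum_sub_distrib,
    Finset.sum_const, Finset.card_univ, Fintype.card_fin, nsmul_eq_mul]
  ring

theorem secondMaxCdf_zero (hN : 2 ≤ N) (hl : ∀ i, 0 < l i) : secondMaxCdf l 0 = 0 := by
  simp [secondMaxCdf, Real.zero_rpow (sum_sub_pos_of_two_le hN hl _).ne',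
    Real.zero_rpow (sum_pos_of_two_le hN hl).ne']

theorem continuous_secondMaxCdf (hl : ∀ i, 0 ≤ l i) : Continuous (secondMaxCdf l) := by
  have hsub : ∀ i, 0 ≤ ∑ j, l j - l i := fun i =>
    sub_nonneg.mpr (Finset.single_le_sum (fun j _ => hl j) (Finset.mem_univ i))
  unfold secondMaxCdf
  exact (continuous_finsetSum _ fun i _ => Real.continuous_rpow_const (hsub i)).sub
    (continuous_const.mul (Real.continuous_rpow_const (Finset.sum_nonneg fun j _ => hl j)))

theorem hasDerivAt_secondMaxCdf {x : ℝ} (hx : 0 < x) :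
    HasDerivAt (secondMaxCdf l) (secondMaxPdf l x) x := by
  have h := (HasDerivAt.fun_sum (u := Finset.univ) fun i _ => Real.hasDerivAt_rpow_const
      (p := ∑ j, l j - l i) (Or.inl hx.ne')).sub
    ((Real.hasDerivAt_rpow_const (p := ∑ j, l j) (Or.inl hx.ne')).const_mul ((N : ℝ) - 1))
  refine (show HasDerivAt (secondMaxCdf l) _ x from h).congr_deriv ?_
  unfold secondMaxPdf
  ring

theorem secondMaxPdf_nonneg (hl : ∀ i, 0 ≤ l i) {t : ℝ} (ht : t ∈ Ioc 0 1) :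
    0 ≤ secondMaxPdf l t := by
  have hcoeff : (1 - (N : ℝ)) * ∑ j, l j = -∑ i, (∑ j, l j - l i) := by
    rw [Finset.sum_sub_distrib, Finset.sum_const, Finset.card_univ, Fintype.card_fin,
      nsmul_eq_mul]
    ring
  have hform : secondMaxPdf l t
      = ∑ i, (∑ j, l j - l i) * (t ^ (∑ j, l j - l i - 1) - t ^ (∑ j, l j - 1)) := by
    rw [secondMaxPdf, hcoeff, neg_mul, Finset.sum_mul, ← Finset.sum_neg_distrib,
      ← Finset.sum_add_distrib]
    exact Finset.sum_congr rfl fun i _ => by ring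
  rw [hform]
  refine Finset.sum_nonneg fun i _ => mul_nonneg ?_ (sub_nonneg.mpr ?_)
  · exact sub_nonneg.mpr (Finset.single_le_sum (fun j _ => hl j) (Finset.mem_univ i))
  · exact Real.rpow_le_rpow_of_exponent_ge ht.1 ht.2 (by linarith [hl i])

theorem intervalIntegrable_secondMaxPdf (hN : 2 ≤ N) (hl : ∀ i, 0 < l i) (a b : ℝ) :
    IntervalIntegrable (secondMaxPdf l) volume a b := by
  have hsum := IntervalIntegrable.sum (μ := volume) (a := a) (b := b) Finset.univ
    fun i _ => (intervalIntegral.intervalIntegrable_rpow' (r := ∑ j, l j - l i - 1)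
      (by linarith [sum_sub_pos_of_two_le hN hl i])).const_mul (∑ j, l j - l i)
  rw [Finset.sum_fn] at hsum
  exact ((intervalIntegral.intervalIntegrable_rpow'
    (by linarith [sum_pos_of_two_le hN hl])).const_mul _).add hsum

theorem setIntegral_Iic_indicator_secondMaxPdf (hN : 2 ≤ N) (hl : ∀ i, 0 < l i) (t : ℝ) :
    ∫ x in Iic t, (Ioc 0 1).indicator (secondMaxPdf l) x = secondMaxCdf l (max 0 (min 1 t)) := by
  have hc : 0 ≤ max 0 (min 1 t) := le_max_left _ _
  have hset : Iic t ∩ Ioc 0 1 = Ioc 0 (max 0 (min 1 t)) := by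
    ext x
    simp only [mem_inter_iff, mem_Iic, mem_Ioc, le_max_iff, le_min_iff]
    grind
  rw [setIntegral_indicator measurableSet_Ioc, hset, ← intervalIntegral.integral_of_le hc,
    intervalIntegral.integral_eq_sub_of_hasDerivAt_of_le hc
      (continuous_secondMaxCdf fun i => (hl i).le).continuousOn
      (fun x hx => hasDerivAt_secondMaxCdf hx.1) (intervalIntegrable_secondMaxPdf hN hl _ _),
    secondMaxCdf_zero hN hl, sub_zero]

end SecondMaxDistribution

section UniformPower

variable {Ω : Type*} [MeasurableSpace Ω] {μ : Measure Ω} {X : Ω → ℝ}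

theorem measure_rpow_preimage (hX : Measurable X)
    (hunif : μ.map X = volume.restrict (Icc 0 1)) (p : ℝ) {s : Set ℝ} (hs : MeasurableSet s) :
    μ ((fun ω => X ω ^ p) ⁻¹' s) = volume ((fun u => u ^ p) ⁻¹' s ∩ Icc 0 1) := by
  have hm : MeasurableSet ((fun u : ℝ => u ^ p) ⁻¹' s) := (by fun_prop : Measurable _) hs
  rw [← Measure.restrict_apply hm, ← hunif, Measure.map_apply hX hm]
  rfl

theorem ae_rpow_mem_Icc (hX : Measurable X) (hunif : μ.map X = volume.restrict (Icc 0 1))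
    {p : ℝ} (hp : 0 ≤ p) : ∀ᵐ ω ∂μ, X ω ^ p ∈ Icc 0 1 :=
  (ae_of_ae_map hX.aemeasurable (hunif ▸ ae_restrict_mem measurableSet_Icc)).mono
    fun _ h => ⟨Real.rpow_nonneg h.1 _, Real.rpow_le_one h.1 h.2 hp⟩

theorem measureReal_rpow_one_div_Iic (hX : Measurable X)
    (hunif : μ.map X = volume.restrict (Icc 0 1)) {l : ℝ} (hl : 0 < l) (t : ℝ) :
    μ.real ((fun ω => X ω ^ (1 / l)) ⁻¹' Iic t) = max 0 (min 1 t) ^ l := by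
  rw [measureReal_def, measure_rpow_preimage hX hunif _ measurableSet_Iic]
  rcases lt_or_ge t 0 with ht | ht
  · have hempty : (fun u : ℝ => u ^ (1 / l)) ⁻¹' Iic t ∩ Icc 0 1 = ∅ :=
      eq_empty_of_forall_notMem fun u ⟨hut, hu⟩ =>
        (Real.rpow_nonneg hu.1 _).not_gt (lt_of_le_of_lt hut ht)
    rw [hempty, max_eq_left (by linarith [min_le_right 1 t]), Real.zero_rpow hl.ne']
    simp
  · have hset : (fun u : ℝ => u ^ (1 / l)) ⁻¹' Iic t ∩ Icc 0 1 = Icc 0 (min 1 (t ^ l)) := by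
      ext u
      simp only [mem_inter_iff, mem_preimage, mem_Iic, mem_Icc, le_min_iff, one_div]
      constructor
      · rintro ⟨hut, hu0, hu1⟩
        exact ⟨hu0, hu1, (Real.rpow_inv_le_iff_of_pos hu0 ht hl).mp hut⟩
      · rintro ⟨hu0, hu1, hut⟩
        exact ⟨(Real.rpow_inv_le_iff_of_pos hu0 ht hl).mpr hut, hu0, hu1⟩
    rw [hset, Real.volume_Icc, sub_zero,
      ENNReal.toReal_ofReal (le_min zero_le_one (Real.rpow_nonneg ht _)),
      max_eq_right (le_min zero_le_one ht),
      (Real.monotoneOn_rpow_Ici_of_exponent_nonneg hl.le).map_min (mem_Ici.mpr zero_le_one)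
        (mem_Ici.mpr ht), Real.one_rpow]

theorem measureReal_rpow_one_div_Iio (hX : Measurable X)
    (hunif : μ.map X = volume.restrict (Icc 0 1)) {l : ℝ} (hl : 0 < l) (t : ℝ) :
    μ.real ((fun ω => X ω ^ (1 / l)) ⁻¹' Iio t) = max 0 (min 1 t) ^ l := by
  have hnull : μ ((fun ω => X ω ^ (1 / l)) ⁻¹' {t}) = 0 := by
    rw [measure_rpow_preimage hX hunif _ (measurableSet_singleton t)]
    refine measure_mono_null (fun u ⟨hut, hu⟩ => ?_) (Real.volume_singleton (a := t ^ l))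
    rw [mem_singleton_iff, ← Real.rpow_inv_rpow hu.1 hl.ne', ← one_div, ← hut]
  rw [← Iic_sdiff_right, preimage_sdiff, measureReal_def, measure_sdiff_null hnull,
    ← measureReal_def, measureReal_rpow_one_div_Iic hX hunif hl]

end UniformPower

theorem MeasureTheory.Measure.eq_withDensity_of_measure_Iic {ν : Measure ℝ} [IsFiniteMeasure ν]
    {f : ℝ → ℝ} (hf : Integrable f) (hf0 : 0 ≤ f)
    (h : ∀ t, ν (Iic t) = ENNReal.ofReal (∫ x in Iic t, f x)) :
    ν = volume.withDensity fun x => ENNReal.ofReal (f x) :=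
  Measure.ext_of_Iic _ _ fun t => by
    rw [h, withDensity_apply _ measurableSet_Iic,
      ofReal_integral_eq_lintegral_ofReal hf.integrableOn (ae_of_all _ hf0)]

theorem integrable_indicator_Icc_comp {Ω : Type*} [MeasurableSpace Ω] {μ : Measure Ω}
    [IsFiniteMeasure μ] {Y : Ω → ℝ} (hY : AEMeasurable Y μ) {V : ℝ → ℝ} {a b : ℝ}
    (hV : ContinuousOn V (Icc a b)) :
    Integrable (fun ω => (Icc a b).indicator V (Y ω)) μ :=
  (integrable_map_measure ((aestronglyMeasurable_indicator_iff measurableSet_Icc).mpr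
    (hV.aestronglyMeasurable measurableSet_Icc)) hY).mp
    ((hV.integrableOn_compact isCompact_Icc).integrable_indicator measurableSet_Icc)

section SecondMaxOfIndependent

variable {Ω : Type*} [MeasurableSpace Ω] {μ : Measure Ω} {N : ℕ} {l : Fin N → ℝ}
  {W : Fin N → Ω → ℝ}

theorem measurable_secondMax (hN : 2 ≤ N) (hWm : ∀ i, Measurable (W i)) :
    Measurable fun ω => secondMax fun i => W i ω := by
  refine measurable_of_Iic fun t => ?_
  have hset : (fun ω => secondMax fun i => W i ω) ⁻¹' Iic t
      = ⋃ i, ⋂ j, ⋂ (_ : j ≠ i), W j ⁻¹' Iic t := by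
    ext ω
    simp only [mem_preimage, secondMax_mem_iff hN (isLowerSet_Iic t), mem_iUnion, mem_iInter]
  rw [hset]
  exact MeasurableSet.iUnion fun i => MeasurableSet.iInter fun j =>
    MeasurableSet.iInter fun _ => hWm j measurableSet_Iic

theorem measureReal_secondMax_mem [IsProbabilityMeasure μ] (hN : 2 ≤ N) (hl : ∀ i, 0 < l i)
    (hW : iIndepFun W μ) (hWm : ∀ i, Measurable (W i)) {s : Set ℝ} (hs : IsLowerSet s)
    (hsm : MeasurableSet s) {c : ℝ} (hc : 0 ≤ c) (hWs : ∀ i, μ.real (W i ⁻¹' s) = c ^ l i) :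
    μ.real {ω | secondMax (fun i => W i ω) ∈ s} = secondMaxCdf l c := by
  have : Nonempty (Fin N) := ⟨⟨0, by omega⟩⟩
  have hprod : ∀ t : Finset (Fin N), ∏ j ∈ t, c ^ l j = c ^ ∑ j ∈ t, l j := fun t =>
    (Real.rpow_sum_of_nonneg hc fun j _ => (hl j).le).symm
  simp only [secondMax_mem_iff hN hs]
  rw [hW.measureReal_exists_forall_ne_mem hWm fun _ => hsm]
  simp only [hWs, hprod, Finset.sum_erase_eq_sub (Finset.mem_univ _)]
  exact add_sum_eq_secondMaxCdf hl hc

theorem map_secondMax_eq_withDensity [IsProbabilityMeasure μ] (hN : 2 ≤ N) (hl : ∀ i, 0 < l i)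
    (hW : iIndepFun W μ) (hWm : ∀ i, Measurable (W i))
    (hWcdf : ∀ i t, μ.real (W i ⁻¹' Iic t) = max 0 (min 1 t) ^ l i) :
    μ.map (fun ω => secondMax fun i => W i ω)
      = volume.withDensity fun t => ENNReal.ofReal ((Ioc 0 1).indicator (secondMaxPdf l) t) := by
  have hSm := measurable_secondMax hN hWm
  have : IsProbabilityMeasure (μ.map fun ω => secondMax fun i => W i ω) :=
    Measure.isProbabilityMeasure_map hSm.aemeasurable
  refine Measure.eq_withDensity_of_measure_Iic
    ((intervalIntegrable_secondMaxPdf hN hl 0 1).1.integrable_indicator measurableSet_Ioc)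
    (fun x => indicator_nonneg (fun x hx => secondMaxPdf_nonneg (fun i => (hl i).le) hx) x)
    fun t => ?_
  rw [Measure.map_apply hSm measurableSet_Iic, setIntegral_Iic_indicator_secondMaxPdf hN hl,
    ← measureReal_secondMax_mem hN hl hW hWm (isLowerSet_Iic t) measurableSet_Iic (le_max_left _ _)
      (hWcdf · t)]
  exact (ofReal_measureReal).symm

theorem integral_indicator_Icc_comp_secondMax [IsProbabilityMeasure μ] (hN : 2 ≤ N)
    (hl : ∀ i, 0 < l i) (hW : iIndepFun W μ) (hWm : ∀ i, Measurable (W i))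
    (hWcdf : ∀ i t, μ.real (W i ⁻¹' Iic t) = max 0 (min 1 t) ^ l i)
    {V : ℝ → ℝ} {r : ℝ} (hr : r ∈ Ioc 0 1) (hV : ContinuousOn V (Icc r 1)) :
    ∫ ω, (Icc r 1).indicator V (secondMax fun i => W i ω) ∂μ
      = ∫ t in r..1, V t * secondMaxPdf l t := by
  have hpdf : Measurable ((Ioc 0 1).indicator (secondMaxPdf l)) :=
    (by unfold secondMaxPdf; fun_prop : Measurable (secondMaxPdf l)).indicator measurableSet_Ioc
  rw [← integral_map (measurable_secondMax hN hWm).aemeasurable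
      ((aestronglyMeasurable_indicator_iff measurableSet_Icc).mpr
        (hV.aestronglyMeasurable measurableSet_Icc)),
    map_secondMax_eq_withDensity hN hl hW hWm hWcdf,
    integral_withDensity_eq_integral_toReal_smul hpdf.ennreal_ofReal
      (ae_of_all _ fun _ => ENNReal.ofReal_lt_top),
    intervalIntegral.integral_of_le hr.2, ← integral_Icc_eq_integral_Ioc,
    ← integral_indicator measurableSet_Icc]
  congr 1
  ext t
  by_cases ht : t ∈ Icc r 1
  · have ht' : t ∈ Ioc 0 1 := ⟨hr.1.trans_le ht.1, ht.2⟩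
    rw [indicator_of_mem ht, indicator_of_mem ht, indicator_of_mem ht',
      ENNReal.toReal_ofReal (secondMaxPdf_nonneg (fun i => (hl i).le) ht'), smul_eq_mul, mul_comm]
  · rw [indicator_of_notMem ht, indicator_of_notMem ht, smul_zero]

end SecondMaxOfIndependent

section Payoff

variable {Ω : Type*} {N : ℕ} {V : ℝ → ℝ} {W : Fin N → Ω → ℝ} {r : ℝ}

theorem payoff_eq_add_indicator (hN : 2 ≤ N) (hV : StrictMonoOn V (Icc 0 1)) {ω : Ω}
    (hW : ∀ i, W i ω ∈ Icc 0 1) (hr : r ∈ Icc 0 1) (V0 : ℝ) :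
    (if sSup (range fun i => V (W i ω)) < V r then V0
      else if secondMax (fun i => V (W i ω)) < V r then V r
      else secondMax fun i => V (W i ω))
      = {ω | ∀ i, W i ω ∈ Iio r}.indicator (fun _ => V0 - V r) ω
        + {ω | secondMax (fun i => W i ω) ∈ Iio r}.indicator (fun _ => V r) ω
        + (Icc r 1).indicator V (secondMax fun i => W i ω) := by
  have : Nonempty (Fin N) := ⟨⟨0, by omega⟩⟩
  have hS := secondMax_mem_of_forall_mem hN hW
  have hmax : sSup (range fun i => V (W i ω)) < V r ↔ ∀ i, W i ω < r := by
    rw [(finite_range _).csSup_lt_iff (range_nonempty _), forall_mem_range]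
    exact forall_congr' fun i => hV.lt_iff_lt (hW i) hr
  have hall : (∀ i, W i ω < r) → secondMax (fun i => W i ω) < r := fun h =>
    (secondMax_mem_iff hN (isLowerSet_Iio r) _).mpr ⟨⟨0, by omega⟩, fun j _ => h j⟩
  have hlt : ∀ {x}, x < r → x ∉ Icc r 1 := fun hx h => hx.not_ge h.1
  rw [secondMax_comp_of_monotoneOn hN hV.monotoneOn hW]
  by_cases h₁ : ∀ i, W i ω < r
  · simp [if_pos (hmax.mpr h₁), indicator, h₁, hall h₁, hlt (hall h₁)]
  · by_cases h₂ : secondMax (fun i => W i ω) < r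
    · simp [if_neg (mt hmax.mp h₁), (hV.lt_iff_lt hS hr).mpr h₂, indicator, h₁, h₂, hlt h₂]
    · simp [if_neg (mt hmax.mp h₁), (hV.lt_iff_lt hS hr), indicator, h₁, h₂, not_lt.mp h₂, hS.2]

theorem integral_payoff_eq [MeasurableSpace Ω] {μ : Measure Ω} [IsProbabilityMeasure μ]
    (hN : 2 ≤ N) (hVc : ContinuousOn V (Icc 0 1)) (hV : StrictMonoOn V (Icc 0 1))
    (hWm : ∀ i, Measurable (W i)) (hW01 : ∀ᵐ ω ∂μ, ∀ i, W i ω ∈ Icc 0 1) (hr : r ∈ Icc 0 1)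
    (V0 : ℝ) :
    ∫ ω, (if sSup (range fun i => V (W i ω)) < V r then V0
      else if secondMax (fun i => V (W i ω)) < V r then V r
      else secondMax fun i => V (W i ω)) ∂μ
      = μ.real {ω | ∀ i, W i ω ∈ Iio r} * (V0 - V r)
        + μ.real {ω | secondMax (fun i => W i ω) ∈ Iio r} * V r
        + ∫ ω, (Icc r 1).indicator V (secondMax fun i => W i ω) ∂μ := by
  have hSm := measurable_secondMax hN hWm
  have hA : MeasurableSet {ω | ∀ i, W i ω ∈ Iio r} := by
    rw [ofPred_forall]; exact .iInter fun i => hWm i measurableSet_Iio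
  have hB : MeasurableSet {ω | secondMax (fun i => W i ω) ∈ Iio r} := hSm measurableSet_Iio
  have hiA := (integrable_const (μ := μ) (V0 - V r)).indicator hA
  have hiB := (integrable_const (μ := μ) (V r)).indicator hB
  rw [integral_congr_ae (hW01.mono fun ω hω => payoff_eq_add_indicator hN hV hω hr V0),
    integral_add ?_ (integrable_indicator_Icc_comp hSm.aemeasurable
      (hVc.mono (Icc_subset_Icc hr.1 le_rfl))),
    integral_add hiA hiB, integral_indicator_const _ hA, integral_indicator_const _ hB,
    smul_eq_mul, smul_eq_mul]
  exact hiA.add hiB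

end Payoff

/-- With parent quantile function `V`, i.i.d. uniforms `U i` and
private values `V(U_i^{1/λ_i})`, reserve price `R = V(r)` and seller value `V_0`,
the seller expected payoff equals the quantile formula
`V_0 r^{Λ_N} + V(r) Σ_i r^{Λ_{N|i}}(1 − r^{λ_i})
  + ∫_r^1 V(t) [(1−N) Λ_N t^{Λ_N−1} + Σ_i Λ_{N|i} t^{Λ_{N|i}−1}] dt`. -/
theorem expected_seller_payoff_quantile_formula
    {Ω : Type*} [MeasurableSpace Ω] (μ : Measure Ω) [IsProbabilityMeasure μ]
    (N : ℕ) (hN : 2 ≤ N) (l : Fin N → ℝ) (hl : ∀ i, 0 < l i)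
    (Λ : ℝ) (hΛ : Λ = ∑ j, l j)
    (Vq : ℝ → ℝ) (hVcont : ContinuousOn Vq (Set.Icc 0 1))
    (hVmono : StrictMonoOn Vq (Set.Icc 0 1))
    (U : Fin N → Ω → ℝ) (hU : ∀ i, Measurable (U i))
    (hindep : iIndepFun U μ)
    (hunif : ∀ i, Measure.map (U i) μ = volume.restrict (Set.Icc (0:ℝ) 1))
    (r : ℝ) (hr : r ∈ Set.Ioo (0:ℝ) 1) (V0 R : ℝ) (hR : R = Vq r) :
    (∫ ω, (if sSup (Set.range fun i => Vq ((U i ω) ^ (1 / l i))) < R then V0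
          else if secondMax (fun i => Vq ((U i ω) ^ (1 / l i))) < R then R
          else secondMax (fun i => Vq ((U i ω) ^ (1 / l i)))) ∂μ)
      = V0 * r ^ Λ + Vq r * ∑ i, r ^ (Λ - l i) * (1 - r ^ (l i))
        + ∫ t in r..1, Vq t * ((1 - (N:ℝ)) * Λ * t ^ (Λ - 1)
            + ∑ i, (Λ - l i) * t ^ (Λ - l i - 1)) := by
  subst hΛ hR
  set W : Fin N → Ω → ℝ := fun i ω => U i ω ^ (1 / l i)
  have hWm : ∀ i, Measurable (W i) := fun i => (hU i).pow_const _
  have hW : iIndepFun W μ := hindep.comp _ fun i => measurable_id.pow_const _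
  have hW01 : ∀ᵐ ω ∂μ, ∀ i, W i ω ∈ Icc 0 1 := ae_all_iff.mpr fun i =>
    ae_rpow_mem_Icc (hU i) (hunif i) (one_div_pos.mpr (hl i)).le
  have hWr : ∀ i, μ.real (W i ⁻¹' Iio r) = r ^ l i := fun i => by
    rw [measureReal_rpow_one_div_Iio (hU i) (hunif i) (hl i), min_eq_right hr.2.le,
      max_eq_right hr.1.le]
  rw [integral_payoff_eq hN hVcont hVmono hWm hW01 ⟨hr.1.le, hr.2.le⟩ V0,
    hW.measureReal_forall_mem fun _ => measurableSet_Iio,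
    measureReal_secondMax_mem hN hl hW hWm (isLowerSet_Iio r) measurableSet_Iio hr.1.le hWr,
    integral_indicator_Icc_comp_secondMax hN hl hW hWm
      (fun i => measureReal_rpow_one_div_Iic (hU i) (hunif i) (hl i)) ⟨hr.1, hr.2.le⟩
      (hVcont.mono (Icc_subset_Icc hr.1.le le_rfl)),
    ← add_sum_eq_secondMaxCdf hl hr.1.le]
  simp only [hWr, ← Real.rpow_sum_of_nonneg hr.1.le fun j _ => (hl j).le]
  rw [Finset.sum_congr rfl fun i _ => mul_comm (1 - r ^ l i) _]
  congr 1
  ring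
end

section
/- Let Π : (0,1) → ℝ be defined by Π(r) = V_0 · r^{Λ_N} + V(r) · Σ_{i=1}^{N} r^{Λ_{N|i}} (1 − r^{λ_i}) + ∫_r^1 V(t) [ (1 − N) Λ_N t^{Λ_N − 1} + Σ_{i=1}^{N} Λ_{N|i} t^{Λ_{N|i} − 1} ] dt, where V is continuously differentiable on (0,1). Then Π is differentiable on (0,1) and for every r ∈ (0,1), Π'(r) = Λ_N r^{Λ_N − 1} · [ V_0 − V(r) − (V'(r) · r / Λ_N) · Σ_{i=1}^{N} (1 − r^{−λ_i}) ]. -/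
/-! The bracket in the integrand is the density of the second-highest of `N` independent values with
distribution functions `t ^ λ_i`: it is the derivative of `t ^ Λ_N + S t`, where
`S t = ∑ i, t ^ Λ_{N|i} * (1 - t ^ λ_i)` is the probability that exactly one value exceeds `t`.
So when `Π` is differentiated, the integral term cancels `V r * S' r` up to `-V r * Λ_N * r ^ (Λ_N - 1)`,
and what remains is `V' r * S r = V' r * r ^ Λ_N * ∑ i, (r ^ (-λ_i) - 1)`. -/

open Set

section
variable {ι : Type*} [Fintype ι]

noncomputable def exactlyOneAbove (Λ : ℝ) (l : ι → ℝ) (r : ℝ) : ℝ :=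
  ∑ i, r ^ (Λ - l i) * (1 - r ^ l i)

noncomputable def secondHighestDensity (Λ : ℝ) (l : ι → ℝ) (t : ℝ) : ℝ :=
  (1 - Fintype.card ι) * Λ * t ^ (Λ - 1) + ∑ i, (Λ - l i) * t ^ (Λ - l i - 1)

variable (Λ : ℝ) (l : ι → ℝ)

theorem exactlyOneAbove_eq {r : ℝ} (hr : 0 < r) :
    exactlyOneAbove Λ l r = ∑ i, (r ^ (Λ - l i) - r ^ Λ) := by
  refine Finset.sum_congr rfl fun i _ => ?_
  rw [mul_one_sub, ← Real.rpow_add hr, sub_add_cancel]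

theorem exactlyOneAbove_eq_rpow_mul {r : ℝ} (hr : 0 < r) :
    exactlyOneAbove Λ l r = r ^ Λ * ∑ i, (r ^ (-l i) - 1) := by
  rw [exactlyOneAbove_eq Λ l hr, Finset.mul_sum]
  refine Finset.sum_congr rfl fun i _ => ?_
  rw [mul_sub_one, ← Real.rpow_add hr, ← sub_eq_add_neg]

theorem hasDerivAt_exactlyOneAbove {t : ℝ} (ht : 0 < t) :
    HasDerivAt (exactlyOneAbove Λ l) (secondHighestDensity Λ l t - Λ * t ^ (Λ - 1)) t := by
  have hS : HasDerivAt (fun s => ∑ i, (s ^ (Λ - l i) - s ^ Λ))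
      (∑ i, ((Λ - l i) * t ^ (Λ - l i - 1) - Λ * t ^ (Λ - 1))) t :=
    HasDerivAt.fun_sum fun i _ =>
      (Real.hasDerivAt_rpow_const (Or.inl ht.ne')).sub (Real.hasDerivAt_rpow_const (Or.inl ht.ne'))
  have hval : secondHighestDensity Λ l t - Λ * t ^ (Λ - 1)
      = ∑ i, ((Λ - l i) * t ^ (Λ - l i - 1) - Λ * t ^ (Λ - 1)) := by
    simp only [secondHighestDensity, Finset.sum_sub_distrib, Finset.sum_const, Finset.card_univ,
      nsmul_eq_mul]
    ring
  rw [hval]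
  exact hS.congr_of_eventuallyEq
    (eventually_gt_nhds ht |>.mono fun s hs => exactlyOneAbove_eq Λ l hs)

theorem continuousOn_secondHighestDensity : ContinuousOn (secondHighestDensity Λ l) (Ioi 0) := by
  refine fun x hx => ContinuousAt.continuousWithinAt ?_
  have hx0 : x ≠ 0 := ne_of_gt hx
  unfold secondHighestDensity
  fun_prop (disch := exact Or.inl hx0)

end

theorem hasDerivAt_integral_left_of_continuousOn {E : Type*} [NormedAddCommGroup E]
    [NormedSpace ℝ E] [CompleteSpace E] {f : ℝ → E} {a b r : ℝ} (hf : ContinuousOn f (Ioc a b))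
    (hr : r ∈ Ioo a b) : HasDerivAt (fun s => ∫ t in s..b, f t) (-f r) r := by
  have hrb : uIcc r b ⊆ Ioc a b := by
    rw [uIcc_of_le hr.2.le]
    exact Icc_subset_Ioc hr.1 le_rfl
  exact intervalIntegral.integral_hasDerivAt_left ((hf.mono hrb).intervalIntegrable)
    ((hf.mono Ioo_subset_Ioc_self).stronglyMeasurableAtFilter isOpen_Ioo r hr)
    ((hf.mono Ioo_subset_Ioc_self).continuousAt (isOpen_Ioo.mem_nhds hr))

theorem expected_revenue_hasDerivAt_general
    (N : ℕ) (hN : 2 ≤ N) (l : Fin N → ℝ) (hl : ∀ i, 0 < l i)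
    (Λ : ℝ) (hΛ : Λ = ∑ j, l j)
    (V V' : ℝ → ℝ)
    (hVcont : ContinuousOn V (Set.Icc 0 1))
    (hV' : ∀ r ∈ Set.Ioo (0:ℝ) 1, HasDerivAt V (V' r) r)
    (V0 : ℝ)
    (revenue : ℝ → ℝ)
    (hrev : ∀ r, revenue r
      = V0 * r ^ Λ + V r * ∑ i, r ^ (Λ - l i) * (1 - r ^ (l i))
        + ∫ t in r..1, V t * ((1 - (N:ℝ)) * Λ * t ^ (Λ - 1)
            + ∑ i, (Λ - l i) * t ^ (Λ - l i - 1))) :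
    ∀ r ∈ Set.Ioo (0:ℝ) 1,
      HasDerivAt revenue
        (Λ * r ^ (Λ - 1) *
          (V0 - V r - (V' r * r / Λ) * ∑ i, (1 - r ^ (-(l i))))) r := by
  intro r hr
  have hr0 : r ≠ 0 := hr.1.ne'
  have hΛ0 : Λ ≠ 0 := by
    rw [hΛ]
    exact (Finset.sum_pos (fun i _ => hl i) ⟨⟨0, by omega⟩, Finset.mem_univ _⟩).ne'
  have hrevenue : revenue = fun s => V0 * s ^ Λ + V s * exactlyOneAbove Λ l s
      + ∫ t in s..1, V t * secondHighestDensity Λ l t := by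
    ext s
    rw [hrev]
    simp only [exactlyOneAbove, secondHighestDensity, Fintype.card_fin]
  have hintegrand : ContinuousOn (fun t => V t * secondHighestDensity Λ l t) (Ioc 0 1) :=
    (hVcont.mono Ioc_subset_Icc_self).mul
      ((continuousOn_secondHighestDensity Λ l).mono Ioc_subset_Ioi_self)
  have hD := (((Real.hasDerivAt_rpow_const (p := Λ) (Or.inl hr0)).const_mul V0).add
      ((hV' r hr).mul (hasDerivAt_exactlyOneAbove Λ l hr.1))).add
      (hasDerivAt_integral_left_of_continuousOn hintegrand hr)
  rw [hrevenue]
  refine hD.congr_deriv ?_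
  rw [exactlyOneAbove_eq_rpow_mul Λ l hr.1, Real.rpow_sub_one hr0]
  simp only [Finset.sum_sub_distrib]
  field_simp
  ring

/-- The seller expected revenue function
`Π(r) = V_0 r^{Λ_N} + V(r) Σ_i r^{Λ_{N|i}}(1 − r^{λ_i})
  + ∫_r^1 V(t)[(1−N)Λ_N t^{Λ_N−1} + Σ_i Λ_{N|i} t^{Λ_{N|i}−1}] dt`
is differentiable on `(0,1)` with derivative
`Π'(r) = Λ_N r^{Λ_N−1} [V_0 − V(r) − (V'(r) r / Λ_N) Σ_i (1 − r^{−λ_i})]`. -/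
theorem expected_revenue_hasDerivAt
    (N : ℕ) (hN : 2 ≤ N) (l : Fin N → ℝ) (hl : ∀ i, 0 < l i)
    (Λ : ℝ) (hΛ : Λ = ∑ j, l j)
    (V V' : ℝ → ℝ)
    (hVcont : ContinuousOn V (Set.Icc 0 1))
    (hV' : ∀ r ∈ Set.Ioo (0:ℝ) 1, HasDerivAt V (V' r) r)
    (hV'cont : ContinuousOn V' (Set.Ioo 0 1))
    (V0 : ℝ)
    (revenue : ℝ → ℝ)
    (hrev : ∀ r, revenue r
      = V0 * r ^ Λ + V r * ∑ i, r ^ (Λ - l i) * (1 - r ^ (l i))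
        + ∫ t in r..1, V t * ((1 - (N:ℝ)) * Λ * t ^ (Λ - 1)
            + ∑ i, (Λ - l i) * t ^ (Λ - l i - 1))) :
    ∀ r ∈ Set.Ioo (0:ℝ) 1,
      HasDerivAt revenue
        (Λ * r ^ (Λ - 1) *
          (V0 - V r - (V' r * r / Λ) * ∑ i, (1 - r ^ (-(l i))))) r :=
  expected_revenue_hasDerivAt_general N hN l hl Λ hΛ V V' hVcont hV' V0 revenue hrev
end

section
/- Let Π : (0,1) → ℝ be the seller expected revenue function defined from V, V_0, and λ_1, …, λ_N as in the context, with V continuously differentiable on (0,1). If r_* ∈ (0,1) is a local maximum of Π, then the first-order condition for the optimal reserve price holds: V_0 = V(r_*) − V'(r_*) · (r_* / Λ_N) · Σ_{i=1}^{N} (r_*^{−λ_i} − 1). -/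
/-!
With `S(r) = ∑ i, r ^ (Λ - λ_i) * (1 - r ^ λ_i)`, the integrand of `Π` at `t` is
`V(t) * (Λ t ^ (Λ - 1) + S'(t))`. Differentiating `Π`, the term `V * S'` coming from `V * S`
cancels against the integral, leaving `Π'(r) = (V_0 - V(r)) Λ r ^ (Λ - 1) + V'(r) S(r)`.
Setting this to zero at `r_*` and using `S(r) = r ^ Λ * ∑ i, (r ^ (-λ_i) - 1)` gives the
first-order condition.
-/

open Real Set Filter Topology MeasureTheory Finset

lemma rpow_sub_mul_one_sub_rpow {x : ℝ} (hx : 0 < x) (a b : ℝ) :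
    x ^ (b - a) * (1 - x ^ a) = x ^ (b - a) - x ^ b := by
  rw [mul_one_sub, ← rpow_add hx, sub_add_cancel]

lemma sum_rpow_sub_mul_one_sub_rpow {ι : Type*} [Fintype ι] (l : ι → ℝ) (b : ℝ) {x : ℝ}
    (hx : 0 < x) :
    ∑ i, x ^ (b - l i) * (1 - x ^ l i) = x ^ b * ∑ i, (x ^ (-l i) - 1) := by
  simp only [rpow_sub_mul_one_sub_rpow hx, mul_sum, mul_sub_one, ← rpow_add hx, ← sub_eq_add_neg]

lemma hasDerivAt_sum_rpow_sub_mul_one_sub_rpow {ι : Type*} [Fintype ι] (l : ι → ℝ) (b : ℝ)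
    {r : ℝ} (hr : 0 < r) :
    HasDerivAt (fun x => ∑ i, x ^ (b - l i) * (1 - x ^ l i))
      (∑ i, (b - l i) * r ^ (b - l i - 1) - Fintype.card ι * (b * r ^ (b - 1))) r := by
  have heq : (fun x => ∑ i, x ^ (b - l i) - Fintype.card ι * x ^ b)
      =ᶠ[𝓝 r] fun x => ∑ i, x ^ (b - l i) * (1 - x ^ l i) := by
    filter_upwards [Ioi_mem_nhds hr] with x hx
    simp only [rpow_sub_mul_one_sub_rpow hx, sum_sub_distrib, sum_const, card_univ, nsmul_eq_mul]
  refine HasDerivAt.congr_of_eventuallyEq ?_ heq.symm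
  exact (HasDerivAt.fun_sum fun i _ => hasDerivAt_rpow_const (Or.inl hr.ne')).sub
    ((hasDerivAt_rpow_const (Or.inl hr.ne')).const_mul _)

lemma hasDerivAt_integral_of_continuousOn_Ioc {g : ℝ → ℝ} {c r b : ℝ}
    (hg : ContinuousOn g (Ioc c b)) (hr : r ∈ Ioo c b) :
    HasDerivAt (fun x => ∫ t in x..b, g t) (-g r) r :=
  intervalIntegral.integral_hasDerivAt_left
    ((hg.mono (Icc_subset_Ioc hr.1 le_rfl)).intervalIntegrable_of_Icc hr.2.le)
    ((hg.mono Ioo_subset_Ioc_self).stronglyMeasurableAtFilter isOpen_Ioo r hr)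
    (hg.continuousAt (mem_of_superset (Ioo_mem_nhds hr.1 hr.2) Ioo_subset_Ioc_self))

lemma hasDerivAt_const_mul_add_mul_add_integral {V p S g : ℝ → ℝ} {a r b v p' s' : ℝ}
    (hV : HasDerivAt V v r) (hp : HasDerivAt p p' r) (hS : HasDerivAt S s' r)
    (hg : HasDerivAt (fun x => ∫ t in x..b, g t) (-g r) r) (hgr : g r = V r * (p' + s')) :
    HasDerivAt (fun x => a * p x + V x * S x + ∫ t in x..b, g t) ((a - V r) * p' + v * S r) r :=
  (((hp.const_mul a).add (hV.mul hS)).add hg).congr_deriv (by rw [hgr]; ring)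

theorem optimal_reserve_price_FOC_general
    (N : ℕ) (hN : 2 ≤ N) (l : Fin N → ℝ) (hl : ∀ i, 0 < l i)
    (Λ : ℝ) (hΛ : Λ = ∑ j, l j)
    (V V' : ℝ → ℝ)
    (hVcont : ContinuousOn V (Set.Icc 0 1))
    (hV' : ∀ r ∈ Set.Ioo (0:ℝ) 1, HasDerivAt V (V' r) r)
    (V0 : ℝ)
    (revenue : ℝ → ℝ)
    (hrev : ∀ r, revenue r
      = V0 * r ^ Λ + V r * ∑ i, r ^ (Λ - l i) * (1 - r ^ (l i))
        + ∫ t in r..1, V t * ((1 - (N:ℝ)) * Λ * t ^ (Λ - 1)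
            + ∑ i, (Λ - l i) * t ^ (Λ - l i - 1)))
    (rs : ℝ) (hrs : rs ∈ Set.Ioo (0:ℝ) 1)
    (hmax : IsLocalMax revenue rs) :
    V0 = V rs - V' rs * (rs / Λ) * ∑ i, (rs ^ (-(l i)) - 1) := by
  have hΛ0 : 0 < Λ := hΛ ▸ sum_pos (fun i _ => hl i)
    (univ_nonempty_iff.2 (Fin.pos_iff_nonempty.1 (by omega)))
  have hweight : ContinuousOn (fun t : ℝ => (1 - (N:ℝ)) * Λ * t ^ (Λ - 1)
      + ∑ i, (Λ - l i) * t ^ (Λ - l i - 1)) (Ioi 0) := by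
    intro t (ht : 0 < t)
    apply ContinuousAt.continuousWithinAt
    fun_prop (disch := exact Or.inl ht.ne')
  have hderiv : HasDerivAt revenue
      ((V0 - V rs) * (Λ * rs ^ (Λ - 1)) + V' rs * ∑ i, rs ^ (Λ - l i) * (1 - rs ^ l i)) rs := by
    rw [funext hrev]
    refine hasDerivAt_const_mul_add_mul_add_integral (hV' rs hrs)
      (hasDerivAt_rpow_const (Or.inl hrs.1.ne'))
      (hasDerivAt_sum_rpow_sub_mul_one_sub_rpow l Λ hrs.1)
      (hasDerivAt_integral_of_continuousOn_Ioc
        ((hVcont.mono Ioc_subset_Icc_self).mul (hweight.mono Ioc_subset_Ioi_self)) hrs) ?_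
    simp only [Fintype.card_fin]
    ring
  have hfoc := hmax.hasDerivAt_eq_zero hderiv
  have hpow : rs ^ Λ = rs ^ (Λ - 1) * rs := by rw [← rpow_add_one hrs.1.ne', sub_add_cancel]
  rw [sum_rpow_sub_mul_one_sub_rpow l Λ hrs.1, hpow] at hfoc
  have hscaled : (V0 - V rs) * Λ + V' rs * rs * ∑ i, (rs ^ (-l i) - 1) = 0 := by
    refine (mul_eq_zero.1 ?_).resolve_left (rpow_pos_of_pos hrs.1 (Λ - 1)).ne'
    linear_combination hfoc
  field_simp
  linear_combination hscaled

/-- If `r_* ∈ (0,1)` is a local maximum of the seller expected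
revenue function `Π`, then the first-order condition for the optimal reserve price
holds: `V_0 = V(r_*) − V'(r_*) (r_*/Λ_N) Σ_i (r_*^{−λ_i} − 1)`. -/
theorem optimal_reserve_price_FOC
    (N : ℕ) (hN : 2 ≤ N) (l : Fin N → ℝ) (hl : ∀ i, 0 < l i)
    (Λ : ℝ) (hΛ : Λ = ∑ j, l j)
    (V V' : ℝ → ℝ)
    (hVcont : ContinuousOn V (Set.Icc 0 1))
    (hV' : ∀ r ∈ Set.Ioo (0:ℝ) 1, HasDerivAt V (V' r) r)
    (hV'cont : ContinuousOn V' (Set.Ioo 0 1))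
    (hV'pos : ∀ r ∈ Set.Ioo (0:ℝ) 1, 0 < V' r)
    (V0 : ℝ)
    (revenue : ℝ → ℝ)
    (hrev : ∀ r, revenue r
      = V0 * r ^ Λ + V r * ∑ i, r ^ (Λ - l i) * (1 - r ^ (l i))
        + ∫ t in r..1, V t * ((1 - (N:ℝ)) * Λ * t ^ (Λ - 1)
            + ∑ i, (Λ - l i) * t ^ (Λ - l i - 1)))
    (rs : ℝ) (hrs : rs ∈ Set.Ioo (0:ℝ) 1)
    (hmax : IsLocalMax revenue rs) :
    V0 = V rs - V' rs * (rs / Λ) * ∑ i, (rs ^ (-(l i)) - 1) :=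
  optimal_reserve_price_FOC_general N hN l hl Λ hΛ V V' hVcont hV' V0 revenue hrev rs hrs hmax
end

section
/- For all real numbers d, δ and τ, with the quantile check function ρ_τ(u) = u(τ − 𝟙(u < 0)), the following identity holds: ρ_τ(d − δ) − ρ_τ(d) − δ(𝟙(d ≤ 0) − τ) = ∫_0^δ [ 𝟙(d ≤ t) − 𝟙(d ≤ 0) ] dt. -/
/-!
Writing `ρ_τ(u) = τ u + (-u)⁺`, the linear parts cancel and the left side becomes
`(δ - d)⁺ - (-d)⁺ - δ 𝟙(d ≤ 0)`. On the right, `t ↦ 𝟙(d ≤ t)` is the right derivative of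
`t ↦ (t - d)⁺` everywhere, so the fundamental theorem of calculus gives
`∫_0^δ 𝟙(d ≤ t) dt = (δ - d)⁺ - (-d)⁺`.
-/

open MeasureTheory Set

lemma mul_sub_ite_neg_eq (τ u : ℝ) :
    u * (τ - (if u < 0 then (1:ℝ) else 0)) = τ * u + max (-u) 0 := by
  split_ifs
  · rw [max_eq_left (by linarith)]; ring
  · rw [max_eq_right (by linarith)]; ring

lemma monotone_ite_le (d : ℝ) : Monotone fun t : ℝ => if d ≤ t then (1:ℝ) else 0 := by
  intro s t hst
  dsimp only
  split_ifs <;> linarith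

lemma hasDerivWithinAt_max_sub_zero_Ioi (d x : ℝ) :
    HasDerivWithinAt (fun t => max (t - d) 0) (if d ≤ x then 1 else 0) (Ioi x) x := by
  split_ifs with hdx
  · refine ((hasDerivAt_id x).sub_const d).hasDerivWithinAt.congr (fun t ht => ?_) ?_
    · exact max_eq_left (by simp only [mem_Ioi] at ht; linarith)
    · exact max_eq_left (by linarith)
  · have hzero : (fun t => max (t - d) 0) =ᶠ[nhds x] fun _ => (0:ℝ) := by
      filter_upwards [Iio_mem_nhds (not_le.mp hdx)] with t ht
      exact max_eq_right (by simp only [mem_Iio] at ht; linarith)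
    exact ((hasDerivAt_const x (0:ℝ)).congr_of_eventuallyEq hzero).hasDerivWithinAt

lemma integral_ite_le (d a b : ℝ) :
    ∫ t in a..b, (if d ≤ t then (1:ℝ) else 0) = max (b - d) 0 - max (a - d) 0 :=
  intervalIntegral.integral_eq_sub_of_hasDeriv_right
    (by fun_prop) (fun x _ => hasDerivWithinAt_max_sub_zero_Ioi d x)
    ((monotone_ite_le d).intervalIntegrable)

/-- Knight-type identity for the quantile check function
`ρ_τ(u) = u(τ − 𝟙(u < 0))`: for all reals `d`, `δ`, `τ`,
`ρ_τ(d − δ) − ρ_τ(d) − δ(𝟙(d ≤ 0) − τ) = ∫_0^δ [𝟙(d ≤ t) − 𝟙(d ≤ 0)] dt`. -/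
theorem check_function_expansion
    (τ d δ : ℝ) (ρ : ℝ → ℝ → ℝ)
    (hρ : ∀ t u, ρ t u = u * (t - (if u < 0 then (1:ℝ) else 0))) :
    ρ τ (d - δ) - ρ τ d - δ * ((if d ≤ 0 then (1:ℝ) else 0) - τ)
      = ∫ t in (0:ℝ)..δ,
          ((if d ≤ t then (1:ℝ) else 0) - (if d ≤ 0 then (1:ℝ) else 0)) := by
  rw [intervalIntegral.integral_sub ((monotone_ite_le d).intervalIntegrable)
      intervalIntegrable_const, integral_ite_le, intervalIntegral.integral_const,
    hρ, hρ, mul_sub_ite_neg_eq, mul_sub_ite_neg_eq, neg_sub, zero_sub, smul_eq_mul]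
  ring
end

section
/- Let D be a real random variable whose law has a density f with respect to Lebesgue measure satisfying f(w) ≤ C for almost every w, where C ≥ 0. Then for every real δ, E[ R̃(D, δ)² ] ≤ C |δ|³, where R̃(d, δ) = ∫_0^δ [ 𝟙(d ≤ t) − 𝟙(d ≤ 0) ] dt. -/
open MeasureTheory

/-- The remainder term `R̃(d, δ) = ∫_0^δ [𝟙(d ≤ t) − 𝟙(d ≤ 0)] dt` in the quadratic
expansion of the quantile check function. -/
noncomputable def quantileRemainder (d δ : ℝ) : ℝ :=
  ∫ t in (0:ℝ)..δ, ((if d ≤ t then (1:ℝ) else 0) - (if d ≤ 0 then (1:ℝ) else 0))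

/-! `R̃(d, δ)` vanishes unless `d` lies between `0` and `δ`, and is at most `|δ|` in absolute
value; so `E[R̃(D, δ)²] ≤ δ² P(D ∈ Ι 0 δ)`, and a density bounded by `C` gives
`P(D ∈ Ι 0 δ) ≤ C |δ|`. -/

open Set Interval

theorem abs_quantileRemainder_le (d δ : ℝ) : |quantileRemainder d δ| ≤ |δ| := by
  have h := intervalIntegral.norm_integral_le_of_norm_le_const (C := 1) (a := 0) (b := δ)
    (f := fun t => (if d ≤ t then (1:ℝ) else 0) - (if d ≤ 0 then (1:ℝ) else 0)) fun t _ => by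
      by_cases h1 : d ≤ t <;> by_cases h2 : d ≤ 0 <;> simp [h1, h2]
  simpa [quantileRemainder] using h

theorem quantileRemainder_eq_zero_of_notMem_uIoc {d δ : ℝ} (hd : d ∉ Ι 0 δ) :
    quantileRemainder d δ = 0 := by
  rw [quantileRemainder, intervalIntegral.integral_congr (g := fun _ => (0:ℝ)),
    intervalIntegral.integral_zero]
  intro t ht
  rw [mem_uIcc] at ht
  rw [uIoc, mem_Ioc, not_and_or, not_lt, not_le] at hd
  rcases hd with hd | hd
  · have hd0 : d ≤ 0 := hd.trans (min_le_left _ _)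
    have hdt : d ≤ t := by rcases ht with ⟨h, -⟩ | ⟨h, -⟩ <;> linarith [min_le_right 0 δ]
    simp [hd0, hdt]
  · have hd0 : ¬ d ≤ 0 := not_le.2 ((le_max_left _ _).trans_lt hd)
    have hdt : ¬ d ≤ t := by rcases ht with ⟨-, h⟩ | ⟨-, h⟩ <;> linarith [le_max_right 0 δ]
    simp [hd0, hdt]

theorem sq_quantileRemainder_le_indicator (d δ : ℝ) :
    quantileRemainder d δ ^ 2 ≤ (Ι 0 δ).indicator (fun _ => δ ^ 2) d := by
  by_cases hd : d ∈ Ι 0 δ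
  · rw [indicator_of_mem hd, ← sq_abs, ← sq_abs δ]
    exact pow_le_pow_left₀ (abs_nonneg _) (abs_quantileRemainder_le d δ) 2
  · rw [indicator_of_notMem hd, quantileRemainder_eq_zero_of_notMem_uIoc hd]
    simp

theorem withDensity_apply_le_mul_of_ae_le {α : Type*} [MeasurableSpace α] {μ : Measure α}
    [SFinite μ] {f : α → ENNReal} {c : ENNReal} (hf : ∀ᵐ a ∂μ, f a ≤ c) (s : Set α) :
    μ.withDensity f s ≤ c * μ s := by
  rw [withDensity_apply' _ s, ← setLIntegral_const]
  exact lintegral_mono_ae (ae_restrict_of_ae hf)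

theorem expected_quantileRemainder_sq_le_general
    {Ω : Type*} [MeasurableSpace Ω] (μ : Measure Ω) [IsProbabilityMeasure μ]
    (D : Ω → ℝ) (hD : Measurable D)
    (f : ℝ → ℝ) (C : ℝ) (hC : 0 ≤ C)
    (hdens : Measure.map D μ = volume.withDensity (fun w => ENNReal.ofReal (f w)))
    (hfC : ∀ᵐ w ∂(volume : Measure ℝ), f w ≤ C) :
    ∀ δ : ℝ, (∫ ω, (quantileRemainder (D ω) δ) ^ 2 ∂μ) ≤ C * |δ| ^ 3 := by
  intro δ
  have hS : MeasurableSet (Ι 0 δ) := measurableSet_uIoc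
  have hprob : μ.real (D ⁻¹' Ι 0 δ) ≤ C * |δ| := by
    refine ENNReal.toReal_le_of_le_ofReal (by positivity) ?_
    calc μ (D ⁻¹' Ι 0 δ) = volume.withDensity (fun w => ENNReal.ofReal (f w)) (Ι 0 δ) := by
          rw [← hdens, Measure.map_apply hD hS]
      _ ≤ ENNReal.ofReal C * volume (Ι 0 δ) :=
          withDensity_apply_le_mul_of_ae_le (hfC.mono fun _ => ENNReal.ofReal_le_ofReal) _
      _ = ENNReal.ofReal (C * |δ|) := by
          rw [Real.volume_uIoc, sub_zero, ENNReal.ofReal_mul hC]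
  calc (∫ ω, (quantileRemainder (D ω) δ) ^ 2 ∂μ)
      ≤ ∫ ω, (D ⁻¹' Ι 0 δ).indicator (fun _ => δ ^ 2) ω ∂μ := by
        refine integral_mono_of_nonneg (.of_forall fun _ => sq_nonneg _)
          ((integrable_const _).indicator (hD hS)) (.of_forall fun ω => ?_)
        have h := sq_quantileRemainder_le_indicator (D ω) δ
        rwa [← indicator_comp_right] at h
    _ = δ ^ 2 * μ.real (D ⁻¹' Ι 0 δ) := by
        rw [integral_indicator_const _ (hD hS), smul_eq_mul, mul_comm]
    _ ≤ δ ^ 2 * (C * |δ|) := by gcongr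
    _ = C * |δ| ^ 3 := by rw [← sq_abs δ]; ring

/-- If the real random variable `D` has a Lebesgue density `f`
bounded (a.e.) by `C ≥ 0`, then for every real `δ`,
`E[R̃(D, δ)²] ≤ C |δ|³`. -/
theorem expected_quantileRemainder_sq_le
    {Ω : Type*} [MeasurableSpace Ω] (μ : Measure Ω) [IsProbabilityMeasure μ]
    (D : Ω → ℝ) (hD : Measurable D)
    (f : ℝ → ℝ) (C : ℝ) (hC : 0 ≤ C)
    (hf0 : ∀ᵐ w ∂(volume : Measure ℝ), 0 ≤ f w)
    (hdens : Measure.map D μ = volume.withDensity (fun w => ENNReal.ofReal (f w)))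
    (hfC : ∀ᵐ w ∂(volume : Measure ℝ), f w ≤ C) :
    ∀ δ : ℝ, (∫ ω, (quantileRemainder (D ω) δ) ^ 2 ∂μ) ≤ C * |δ| ^ 3 :=
  expected_quantileRemainder_sq_le_general μ D hD f C hC hdens hfC
end

section
/- Let V : [0,1] → ℝ be twice continuously differentiable with V'(0) > 0, and let 1/2 < λ < 1. Define the marginal revenue function MR(t) = V(t^{1/λ}) − (1 − t) · (t^{1/λ − 1}/λ) · V'(t^{1/λ}) for t ∈ (0,1). Then MR'(t) → −∞ as t → 0⁺; in particular there exists ε > 0 such that MR is strictly decreasing on (0, ε), so the downward sloping marginal revenue condition of Bulow and Klemperer fails for a bidder with asymmetry exponent λ. -/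
open Set Filter Real Topology


/-- Let `V : [0,1] → ℝ` be twice continuously differentiable with
`V'(0) > 0` and let `1/2 < λ < 1`. For the marginal revenue function
`MR(t) = V(t^{1/λ}) − (1 − t)(t^{1/λ−1}/λ) V'(t^{1/λ})`, the derivative `MR'`
tends to `−∞` as `t → 0⁺`; in particular `MR` is strictly decreasing on some
`(0, ε)`, so the downward sloping marginal revenue condition of Bulow and
Klemperer fails. -/
theorem marginal_revenue_condition_fails
    (lam : ℝ) (hlam1 : 1 / 2 < lam) (hlam2 : lam < 1)
    (V V' V'' : ℝ → ℝ)
    (hV : ∀ t ∈ Set.Icc (0:ℝ) 1, HasDerivWithinAt V (V' t) (Set.Icc 0 1) t)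
    (hV' : ∀ t ∈ Set.Icc (0:ℝ) 1, HasDerivWithinAt V' (V'' t) (Set.Icc 0 1) t)
    (hV''cont : ContinuousOn V'' (Set.Icc 0 1))
    (hV'0 : 0 < V' 0)
    (MR : ℝ → ℝ)
    (hMR : ∀ t, MR t
      = V (t ^ (1 / lam)) - (1 - t) * (t ^ (1 / lam - 1) / lam) * V' (t ^ (1 / lam))) :
    (∀ MR' : ℝ → ℝ, (∀ t ∈ Set.Ioo (0:ℝ) 1, HasDerivAt MR (MR' t) t) →
      Filter.Tendsto MR' (nhdsWithin 0 (Set.Ioi 0)) Filter.atBot) ∧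
    ∃ ε > 0, StrictAntiOn MR (Set.Ioo 0 ε) := by
  have hlam0 : (0:ℝ) < lam := by linarith
  set a : ℝ := 1 / lam with ha_def
  have ha1 : 1 < a := by
    rw [ha_def, lt_div_iff₀ hlam0]; linarith
  have ha2 : a < 2 := by
    rw [ha_def, div_lt_iff₀ hlam0]; linarith
  have ha0 : 0 < a := by linarith
  -- the explicit derivative
  set D : ℝ → ℝ := fun t =>
    V' (t ^ a) * (a * t ^ (a - 1)) -
      ((-1 * (t ^ (a - 1) / lam) + (1 - t) * ((a - 1) * t ^ (a - 2) / lam)) * V' (t ^ a)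
        + (1 - t) * (t ^ (a - 1) / lam) * (V'' (t ^ a) * (a * t ^ (a - 1)))) with hD_def
  -- factored form
  set E : ℝ → ℝ := fun t =>
    a * t * V' (t ^ a) + t / lam * V' (t ^ a) - (1 - t) * ((a - 1) / lam) * V' (t ^ a)
      - (1 - t) * (a / lam) * (t ^ a) * V'' (t ^ a) with hE_def
  have hMReq : MR = fun x => V (x ^ a) - (1 - x) * (x ^ (a - 1) / lam) * V' (x ^ a) :=
    funext hMR
  -- MR has derivative D on (0,1)
  have hDeriv : ∀ t ∈ Set.Ioo (0:ℝ) 1, HasDerivAt MR (D t) t := by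
    intro t ht
    obtain ⟨ht0, ht1⟩ := ht
    have hs : t ^ a ∈ Set.Ioo (0:ℝ) 1 :=
      ⟨Real.rpow_pos_of_pos ht0 a, Real.rpow_lt_one ht0.le ht1 ha0⟩
    have hV1 : HasDerivAt V (V' (t ^ a)) (t ^ a) :=
      (hV _ (Set.Ioo_subset_Icc_self hs)).hasDerivAt (Icc_mem_nhds hs.1 hs.2)
    have hV2 : HasDerivAt V' (V'' (t ^ a)) (t ^ a) :=
      (hV' _ (Set.Ioo_subset_Icc_self hs)).hasDerivAt (Icc_mem_nhds hs.1 hs.2)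
    have hpow : HasDerivAt (fun x : ℝ => x ^ a) (a * t ^ (a - 1)) t :=
      Real.hasDerivAt_rpow_const (Or.inl ht0.ne')
    have hA : HasDerivAt (fun x : ℝ => V (x ^ a)) (V' (t ^ a) * (a * t ^ (a - 1))) t :=
      hV1.comp t hpow
    have hB : HasDerivAt (fun x : ℝ => V' (x ^ a)) (V'' (t ^ a) * (a * t ^ (a - 1))) t :=
      hV2.comp t hpow
    have hpow2 : HasDerivAt (fun x : ℝ => x ^ (a - 1)) ((a - 1) * t ^ (a - 2)) t := by
      have h := Real.hasDerivAt_rpow_const (p := a - 1) (Or.inl ht0.ne')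
      rwa [show a - 1 - 1 = a - 2 by ring] at h
    have hpow2' : HasDerivAt (fun x : ℝ => x ^ (a - 1) / lam) ((a - 1) * t ^ (a - 2) / lam) t :=
      hpow2.div_const lam
    have hone : HasDerivAt (fun x : ℝ => 1 - x) (-1) t := by
      simpa using (hasDerivAt_id t).const_sub 1
    have hprod1 := hone.mul hpow2'
    have hprod2 := hprod1.mul hB
    rw [hMReq]
    exact hA.sub hprod2
  -- algebraic identity  D t = t^(a-2) * E t  for t > 0
  have hfact : ∀ t : ℝ, 0 < t → D t = t ^ (a - 2) * E t := by
    intro t ht0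
    have h1 : t ^ (a - 1) = t ^ (a - 2) * t := by
      rw [show a - 1 = a - 2 + 1 by ring, Real.rpow_add ht0, Real.rpow_one]
    have h3 : t ^ a = t ^ (a - 2) * t * t := by
      nth_rewrite 1 [show a = a - 2 + 1 + 1 by ring]
      rw [Real.rpow_add ht0, Real.rpow_add ht0, Real.rpow_one]
    have key : ∀ P Q x1 x2 x3 : ℝ, x1 = x2 * t → x3 = x2 * t * t →
        P * (a * x1) - ((-1 * (x1 / lam) + (1 - t) * ((a - 1) * x2 / lam)) * P
          + (1 - t) * (x1 / lam) * (Q * (a * x1)))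
        = x2 * (a * t * P + t / lam * P - (1 - t) * ((a - 1) / lam) * P
            - (1 - t) * (a / lam) * x3 * Q) := by
      intro P Q x1 x2 x3 hx1 hx3
      subst hx1; subst hx3
      field_simp
      ring
    exact key (V' (t ^ a)) (V'' (t ^ a)) _ _ _ h1 h3
  -- limits
  have hid : Tendsto (fun t : ℝ => t) (𝓝[>] (0:ℝ)) (𝓝 0) := by
    rw [show (fun t : ℝ => t) = id from rfl]
    exact tendsto_id.mono_right nhdsWithin_le_nhds
  have hIoo : Set.Ioo (0:ℝ) 1 ∈ 𝓝[>] (0:ℝ) :=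
    Ioo_mem_nhdsGT_of_mem ⟨le_refl 0, by norm_num⟩
  have hpa : Tendsto (fun t : ℝ => t ^ a) (𝓝[>] (0:ℝ)) (𝓝 0) := by
    have hc : ContinuousAt (fun x : ℝ => x ^ a) 0 :=
      Real.continuousAt_rpow_const 0 a (Or.inr ha0.le)
    have := hc.tendsto.mono_left (nhdsWithin_le_nhds (s := Set.Ioi (0:ℝ)))
    rwa [Real.zero_rpow ha0.ne'] at this
  have hpaIcc : Tendsto (fun t : ℝ => t ^ a) (𝓝[>] (0:ℝ)) (𝓝[Set.Icc 0 1] 0) := by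
    apply tendsto_nhdsWithin_of_tendsto_nhds_of_eventually_within _ hpa
    filter_upwards [hIoo] with t ht
    exact ⟨(Real.rpow_pos_of_pos ht.1 a).le, (Real.rpow_lt_one ht.1.le ht.2 ha0).le⟩
  have h01 : (0:ℝ) ∈ Set.Icc (0:ℝ) 1 := ⟨le_refl 0, by norm_num⟩
  have hv' : Tendsto (fun t : ℝ => V' (t ^ a)) (𝓝[>] (0:ℝ)) (𝓝 (V' 0)) :=
    ((hV' 0 h01).continuousWithinAt.tendsto).comp hpaIcc
  have hv'' : Tendsto (fun t : ℝ => V'' (t ^ a)) (𝓝[>] (0:ℝ)) (𝓝 (V'' 0)) :=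
    ((hV''cont 0 h01).tendsto).comp hpaIcc
  have hone' : Tendsto (fun t : ℝ => 1 - t) (𝓝[>] (0:ℝ)) (𝓝 1) := by
    have := (tendsto_const_nhds (x := (1:ℝ)) (f := 𝓝[>] (0:ℝ))).sub hid
    simpa using this
  have hc_neg : -((a - 1) / lam * V' 0) < 0 := by
    have h1 : 0 < a - 1 := by linarith
    have : 0 < (a - 1) / lam * V' 0 := mul_pos (div_pos h1 hlam0) hV'0
    linarith
  have hE : Tendsto E (𝓝[>] (0:ℝ)) (𝓝 (-((a - 1) / lam * V' 0))) := by
    have hT := ((((tendsto_const_nhds (x := a)).mul hid).mul hv').add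
        ((hid.div_const lam).mul hv')).sub
        (((hone'.mul (tendsto_const_nhds (x := (a-1)/lam))).mul hv')) |>.sub
        ((((hone'.mul (tendsto_const_nhds (x := a/lam))).mul hpa)).mul hv'')
    have hval : a * 0 * V' 0 + 0 / lam * V' 0 - 1 * ((a - 1) / lam) * V' 0
        - 1 * (a / lam) * 0 * V'' 0 = -((a - 1) / lam * V' 0) := by ring
    rwa [hval] at hT
  have hpowlim : Tendsto (fun t : ℝ => t ^ (a - 2)) (𝓝[>] (0:ℝ)) atTop := by
    have h2a : 0 < 2 - a := by linarith
    have hsm : Tendsto (fun t : ℝ => t ^ (2 - a)) (𝓝[>] (0:ℝ)) (𝓝[>] 0) := by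
      apply tendsto_nhdsWithin_of_tendsto_nhds_of_eventually_within
      · have hc : ContinuousAt (fun x : ℝ => x ^ (2 - a)) 0 :=
          Real.continuousAt_rpow_const 0 (2 - a) (Or.inr h2a.le)
        have := hc.tendsto.mono_left (nhdsWithin_le_nhds (s := Set.Ioi (0:ℝ)))
        rwa [Real.zero_rpow h2a.ne'] at this
      · filter_upwards [self_mem_nhdsWithin] with t ht
        exact Real.rpow_pos_of_pos ht (2 - a)
    have := hsm.inv_tendsto_nhdsGT_zero
    apply this.congr'
    filter_upwards [self_mem_nhdsWithin] with t ht
    show (t ^ (2 - a))⁻¹ = t ^ (a - 2)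
    rw [← Real.rpow_neg (le_of_lt ht), show -(2 - a) = a - 2 by ring]
  have hDtend : Tendsto D (𝓝[>] (0:ℝ)) atBot := by
    have := hpowlim.atTop_mul_neg hc_neg hE
    apply this.congr'
    filter_upwards [self_mem_nhdsWithin] with t ht
    exact (hfact t ht).symm
  constructor
  · intro MR' hMR'
    apply hDtend.congr'
    filter_upwards [hIoo] with t ht
    exact (hDeriv t ht).unique (hMR' t ht)
  · -- eventually D < 0
    have hev : ∀ᶠ t in 𝓝[>] (0:ℝ), D t < 0 := hDtend.eventually (eventually_lt_atBot 0)
    rw [eventually_nhdsWithin_iff, Metric.eventually_nhds_iff] at hev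
    obtain ⟨δ, hδ0, hδ⟩ := hev
    refine ⟨min δ 1, lt_min hδ0 one_pos, ?_⟩
    have hsub : Set.Ioo (0:ℝ) (min δ 1) ⊆ Set.Ioo 0 1 :=
      Set.Ioo_subset_Ioo le_rfl (min_le_right δ 1)
    have hneg : ∀ t ∈ Set.Ioo (0:ℝ) (min δ 1), D t < 0 := by
      intro t ht
      have hd : dist t 0 < δ := by
        rw [Real.dist_eq, sub_zero, abs_of_pos ht.1]
        exact lt_of_lt_of_le ht.2 (min_le_left δ 1)
      exact hδ hd ht.1
    apply strictAntiOn_of_deriv_neg (convex_Ioo 0 (min δ 1))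
    · intro t ht
      exact ((hDeriv t (hsub ht)).continuousAt).continuousWithinAt
    · intro t ht
      rw [interior_Ioo] at ht
      rw [(hDeriv t (hsub ht)).deriv]
      exact hneg t ht
end

section
/- Under the power asymmetry specification with F continuous and strictly increasing from 0 to 1 on an interval [a,b] with inverse V : [0,1] → [a,b], for every bidder i and every τ ∈ [0,1]: P( max_{j≠i} V_j ≤ V(τ) | V_i > max_{j≠i} V_j ) = Ψ_i(τ), where Ψ_i(τ) = (Λ_N τ^{Λ_{N|i}} − Λ_{N|i} τ^{Λ_N}) / λ_i. Equivalently, conditional on bidder i winning, the quantile of the winning bid at level Ψ_i(τ) equals the parent quantile V(τ). -/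
/-!
Let `M = max_{j ≠ i} V_j` be the highest rival bid. By independence `M` has c.d.f. `F ^ Λ_{N|i}`
and is independent of `V_i`. Since both variables live a.s. on `[a, b]`, where `F` is strictly
increasing, applying `F` changes none of the events and turns `(M, V_i)` into independent
variables `(X, Y)` on `[0, 1]` with c.d.f.s `t ^ α` and `t ^ β`, where `α = Λ_{N|i}`, `β = λ_i`.
For these, `P(X < Y, X ≤ τ) = ∫_{[0, τ]} (1 - x ^ β) dP_X(x)`, and as `X ^ α` is uniform the
substitution `u = x ^ α` gives `∫_0^{τ ^ α} (1 - u ^ (β / α)) du = τ ^ α - α / (α + β) τ ^ (α + β)`.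
At `τ = 1` this is the winning probability `β / (α + β)`, and the quotient is `Ψ_i(τ)`.
-/

open MeasureTheory ProbabilityTheory Set
open scoped ENNReal

section Maximum

variable {Ω ι : Type*} [MeasurableSpace Ω] {μ : Measure Ω} {s : Finset ι} {X : ι → Ω → ℝ}

lemma Finset.measurable_sup'_apply (hs : s.Nonempty)
    (hX : ∀ j, Measurable (X j)) : Measurable fun ω => s.sup' hs (X · ω) := by
  convert Finset.measurable_sup' hs fun j _ => hX j with ω
  exact (Finset.sup'_apply (C := fun _ => ℝ) hs X ω).symm

lemma ProbabilityTheory.iIndepFun.measure_sup'_le (h : iIndepFun X μ) (hs : s.Nonempty) (v : ℝ) :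
    μ {ω | s.sup' hs (X · ω) ≤ v} = ∏ j ∈ s, μ {ω | X j ω ≤ v} := by
  have hset : {ω | s.sup' hs (X · ω) ≤ v} = ⋂ j ∈ s, {ω | X j ω ≤ v} := by
    ext ω; simp [Finset.sup'_le_iff]
  rw [hset]
  exact h.meas_biInter fun j _ => ⟨Iic v, measurableSet_Iic, rfl⟩

lemma ProbabilityTheory.iIndepFun.indepFun_sup' (h : iIndepFun X μ) (hX : ∀ j, Measurable (X j))
    (hs : s.Nonempty) {i : ι} (hi : i ∉ s) :
    IndepFun (fun ω => s.sup' hs (X · ω)) (X i) μ := by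
  have : Nonempty s := hs.to_subtype
  convert (h.indepFun_finset s {i} (Finset.disjoint_singleton_right.2 hi) hX).comp
    (Finset.measurable_sup'_apply Finset.univ_nonempty measurable_pi_apply)
    (measurable_pi_apply ⟨i, Finset.mem_singleton_self i⟩) using 1
  · ext ω
    symm
    exact (Finset.sup'_comp_eq_map (f := Function.Embedding.subtype (· ∈ s)) (fun j => X j ω)
      Finset.univ_nonempty).trans
      (Finset.sup'_congr _ (by rw [Finset.univ_eq_attach, Finset.attach_map_val]) fun _ _ => rfl)
  · rfl

end Maximum

lemma lintegral_Ioc_ofReal_one_sub_rpow {p s : ℝ} (hp : 0 ≤ p) (hs : s ∈ Icc (0 : ℝ) 1) :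
    ∫⁻ u in Ioc 0 s, ENNReal.ofReal (1 - u ^ p) = ENNReal.ofReal (s - s ^ (p + 1) / (p + 1)) := by
  have hint : IntervalIntegrable (fun u : ℝ => u ^ p) volume 0 s :=
    intervalIntegral.intervalIntegrable_rpow' (by linarith)
  have hnn : 0 ≤ᵐ[volume.restrict (Ioc 0 s)] fun u : ℝ => 1 - u ^ p :=
    (ae_restrict_mem measurableSet_Ioc).mono fun u hu =>
      sub_nonneg.2 (Real.rpow_le_one hu.1.le (hu.2.trans hs.2) hp)
  rw [← ofReal_integral_eq_lintegral_ofReal (intervalIntegrable_const.sub hint).1 hnn,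
    ← intervalIntegral.integral_of_le hs.1, intervalIntegral.integral_sub intervalIntegrable_const
    hint, intervalIntegral.integral_const, integral_rpow (Or.inl (by linarith)),
    Real.zero_rpow (by linarith)]
  simp

lemma ae_pos_of_measure_Iic_zero {ν : Measure ℝ} (h : ν (Iic 0) = 0) : ∀ᵐ x ∂ν, 0 < x := by
  rw [ae_iff]; simp only [not_lt]; exact h

lemma MeasureTheory.Measure.map_eq_volume_restrict_Ioc_of_measure_le {α : Type*}
    [MeasurableSpace α] {ν : Measure α} [IsProbabilityMeasure ν] {φ : α → ℝ} (hφ : Measurable φ)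
    (h : ∀ u ∈ Icc (0 : ℝ) 1, ν {x | φ x ≤ u} = ENNReal.ofReal u) :
    ν.map φ = volume.restrict (Ioc 0 1) := by
  refine Measure.ext_of_Iic _ _ fun u => ?_
  rw [Measure.map_apply hφ measurableSet_Iic, Measure.restrict_apply measurableSet_Iic,
    inter_comm, Ioc_inter_Iic, Real.volume_Ioc, sub_zero]
  change ν {x | φ x ≤ u} = _
  rcases lt_or_ge u 0 with hu0 | hu0
  · rw [ENNReal.ofReal_of_nonpos (min_le_right _ _ |>.trans hu0.le), ← nonpos_iff_eq_zero,
      ← ENNReal.ofReal_zero, ← h 0 ⟨le_rfl, zero_le_one⟩]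
    exact measure_mono fun x (hx : φ x ≤ u) => show φ x ≤ 0 by linarith
  rcases le_or_gt u 1 with hu1 | hu1
  · rw [min_eq_right hu1, h u ⟨hu0, hu1⟩]
  · rw [min_eq_left hu1.le, ← h 1 ⟨zero_le_one, le_rfl⟩]
    refine le_antisymm ?_ (measure_mono fun x (hx : φ x ≤ 1) => show φ x ≤ u by linarith)
    simp [h 1 ⟨zero_le_one, le_rfl⟩, prob_le_one]

lemma MeasureTheory.Measure.map_rpow_eq_volume_restrict_Ioc {ν : Measure ℝ}
    [IsProbabilityMeasure ν] {α : ℝ} (hα : 0 < α)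
    (h : ∀ t ∈ Icc (0 : ℝ) 1, ν (Iic t) = ENNReal.ofReal (t ^ α)) :
    ν.map (· ^ α) = volume.restrict (Ioc 0 1) := by
  have hpos := ae_pos_of_measure_Iic_zero <| by
    simpa [Real.zero_rpow hα.ne'] using h 0 ⟨le_rfl, zero_le_one⟩
  refine map_eq_volume_restrict_Ioc_of_measure_le (measurable_id.pow_const α) fun u hu => ?_
  have hroot : u ^ α⁻¹ ∈ Icc (0 : ℝ) 1 :=
    ⟨Real.rpow_nonneg hu.1 _, Real.rpow_le_one hu.1 hu.2 (inv_nonneg.2 hα.le)⟩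
  calc ν {x | x ^ α ≤ u} = ν (Iic (u ^ α⁻¹)) := measure_congr <| Filter.eventuallyEq_set.2 <|
        hpos.mono fun x hx => (Real.le_rpow_inv_iff_of_pos hx.le hu.1 hα).symm
    _ = ENNReal.ofReal u := by rw [h _ hroot, Real.rpow_inv_rpow hu.1 hα.ne']

section Race

variable {Ω : Type*} [MeasurableSpace Ω] {μ : Measure Ω} {X Y : Ω → ℝ}

lemma ProbabilityTheory.IndepFun.measure_lt_and_le_eq_lintegral [IsFiniteMeasure μ]
    (hX : Measurable X) (hY : Measurable Y) (hXY : IndepFun X Y μ) (c : ℝ) :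
    μ {ω | X ω < Y ω ∧ X ω ≤ c} = ∫⁻ x in Iic c, μ.map Y (Ioi x) ∂μ.map X := by
  have hS : MeasurableSet {p : ℝ × ℝ | p.1 < p.2 ∧ p.1 ≤ c} :=
    (measurableSet_lt measurable_fst measurable_snd).inter (measurable_fst measurableSet_Iic)
  rw [← lintegral_indicator measurableSet_Iic]
  change μ ((fun ω => (X ω, Y ω)) ⁻¹' {p : ℝ × ℝ | p.1 < p.2 ∧ p.1 ≤ c}) = _
  rw [← Measure.map_apply (hX.prodMk hY) hS,
    (indepFun_iff_map_prod_eq_prod_map_map hX.aemeasurable hY.aemeasurable).1 hXY,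
    Measure.prod_apply hS]
  congr 1 with x
  by_cases hx : x ≤ c
  · simp [hx, Ioi]
  · simp [hx]

variable [IsProbabilityMeasure μ] {α β : ℝ}

theorem ProbabilityTheory.IndepFun.measure_lt_and_le_of_cdf_rpow (hX : Measurable X)
    (hY : Measurable Y) (hXY : IndepFun X Y μ) (hα : 0 < α) (hβ : 0 < β)
    (hXcdf : ∀ t ∈ Icc (0 : ℝ) 1, μ {ω | X ω ≤ t} = ENNReal.ofReal (t ^ α))
    (hYcdf : ∀ t ∈ Icc (0 : ℝ) 1, μ {ω | Y ω ≤ t} = ENNReal.ofReal (t ^ β))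
    {τ : ℝ} (hτ : τ ∈ Icc (0 : ℝ) 1) :
    μ {ω | X ω < Y ω ∧ X ω ≤ τ} = ENNReal.ofReal (τ ^ α - α / (α + β) * τ ^ (α + β)) := by
  have : IsProbabilityMeasure (μ.map X) := Measure.isProbabilityMeasure_map hX.aemeasurable
  have hν : ∀ t ∈ Icc (0 : ℝ) 1, μ.map X (Iic t) = ENNReal.ofReal (t ^ α) := fun t ht => by
    rw [Measure.map_apply hX measurableSet_Iic]; exact hXcdf t ht
  have htail : ∀ x ∈ Icc (0 : ℝ) 1, μ.map Y (Ioi x) = ENNReal.ofReal (1 - x ^ β) := by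
    intro x hx
    rw [Measure.map_apply hY measurableSet_Ioi, ← compl_Iic, preimage_compl,
      prob_compl_eq_one_sub (hY measurableSet_Iic), ENNReal.ofReal_sub _ (Real.rpow_nonneg hx.1 _),
      ENNReal.ofReal_one]
    exact congrArg _ (hYcdf x hx)
  have hτα : τ ^ α ∈ Icc (0 : ℝ) 1 :=
    ⟨Real.rpow_nonneg hτ.1 _, Real.rpow_le_one hτ.1 hτ.2 hα.le⟩
  set g : ℝ → ℝ≥0∞ := (Iic (τ ^ α)).indicator fun u => ENNReal.ofReal (1 - u ^ (β / α))
    with hg_def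
  have hg : Measurable g := (ENNReal.measurable_ofReal.comp
    (measurable_const.sub (measurable_id.pow_const _))).indicator measurableSet_Iic
  have hsubst : ∀ᵐ x ∂μ.map X, (Iic τ).indicator (fun x => μ.map Y (Ioi x)) x = g (x ^ α) := by
    have hpos := ae_pos_of_measure_Iic_zero <| by
      simpa [Real.zero_rpow hα.ne'] using hν 0 ⟨le_rfl, zero_le_one⟩
    filter_upwards [hpos] with x hx
    have hmono : x ≤ τ ↔ x ^ α ≤ τ ^ α := (Real.rpow_le_rpow_iff hx.le hτ.1 hα).symm
    rw [hg_def]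
    by_cases hxτ : x ≤ τ
    · rw [indicator_of_mem (mem_Iic.2 hxτ), indicator_of_mem (mem_Iic.2 (hmono.1 hxτ)),
        htail x ⟨hx.le, hxτ.trans hτ.2⟩, ← Real.rpow_mul hx.le, mul_div_cancel₀ _ hα.ne']
    · rw [indicator_of_notMem (mt mem_Iic.1 hxτ),
        indicator_of_notMem (mt (mem_Iic.1 · |> hmono.2) hxτ)]
  rw [hXY.measure_lt_and_le_eq_lintegral hX hY, ← lintegral_indicator measurableSet_Iic,
    lintegral_congr_ae hsubst, ← lintegral_map hg (Real.continuous_rpow_const hα.le).measurable,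
    Measure.map_rpow_eq_volume_restrict_Ioc hα hν, lintegral_indicator measurableSet_Iic,
    Measure.restrict_restrict measurableSet_Iic, Iic_inter_Ioc_of_le hτα.2,
    lintegral_Ioc_ofReal_one_sub_rpow (div_nonneg hβ.le hα.le) hτα, ← Real.rpow_mul hτ.1]
  congr 1
  field_simp
  ring_nf

theorem ProbabilityTheory.IndepFun.measure_lt_of_cdf_rpow (hX : Measurable X)
    (hY : Measurable Y) (hXY : IndepFun X Y μ) (hα : 0 < α) (hβ : 0 < β)
    (hXcdf : ∀ t ∈ Icc (0 : ℝ) 1, μ {ω | X ω ≤ t} = ENNReal.ofReal (t ^ α))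
    (hYcdf : ∀ t ∈ Icc (0 : ℝ) 1, μ {ω | Y ω ≤ t} = ENNReal.ofReal (t ^ β)) :
    μ {ω | X ω < Y ω} = ENNReal.ofReal (β / (α + β)) := by
  have hX1 : ∀ᵐ ω ∂μ, X ω ≤ 1 :=
    (prob_compl_eq_zero_iff (s := {ω | X ω ≤ 1}) (hX measurableSet_Iic)).2 <| by
      simpa using hXcdf 1 ⟨zero_le_one, le_rfl⟩
  calc μ {ω | X ω < Y ω} = μ {ω | X ω < Y ω ∧ X ω ≤ 1} :=
        measure_congr <| Filter.eventuallyEq_set.2 <| hX1.mono fun ω h => (and_iff_left h).symm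
    _ = ENNReal.ofReal (β / (α + β)) := by
      rw [hXY.measure_lt_and_le_of_cdf_rpow hX hY hα hβ hXcdf hYcdf ⟨zero_le_one, le_rfl⟩]
      congr 1
      field_simp
      simp

theorem ProbabilityTheory.IndepFun.cond_le_of_cdf_rpow (hX : Measurable X)
    (hY : Measurable Y) (hXY : IndepFun X Y μ) (hα : 0 < α) (hβ : 0 < β)
    (hXcdf : ∀ t ∈ Icc (0 : ℝ) 1, μ {ω | X ω ≤ t} = ENNReal.ofReal (t ^ α))
    (hYcdf : ∀ t ∈ Icc (0 : ℝ) 1, μ {ω | Y ω ≤ t} = ENNReal.ofReal (t ^ β))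
    {τ : ℝ} (hτ : τ ∈ Icc (0 : ℝ) 1) :
    (μ[{ω | X ω ≤ τ} | {ω | X ω < Y ω}]).toReal = ((α + β) * τ ^ α - α * τ ^ (α + β)) / β := by
  have hnonneg : 0 ≤ τ ^ α - α / (α + β) * τ ^ (α + β) := by
    have hfrac : α / (α + β) ≤ 1 := (div_le_one (by linarith)).2 (by linarith)
    have hpow : τ ^ (α + β) ≤ τ ^ α :=
      Real.rpow_le_rpow_of_exponent_ge' hτ.1 hτ.2 hα.le (by linarith)
    nlinarith [Real.rpow_nonneg hτ.1 (α + β)]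
  rw [cond_apply (measurableSet_lt hX hY), ← ofPred_and,
    hXY.measure_lt_of_cdf_rpow hX hY hα hβ hXcdf hYcdf,
    hXY.measure_lt_and_le_of_cdf_rpow hX hY hα hβ hXcdf hYcdf hτ,
    ENNReal.toReal_mul, ENNReal.toReal_inv, ENNReal.toReal_ofReal (by positivity),
    ENNReal.toReal_ofReal hnonneg]
  field_simp

end Race

lemma ProbabilityTheory.cond_congr_ae {Ω : Type*} [MeasurableSpace Ω] {μ : Measure Ω}
    {s s' t t' : Set Ω} (hs : s =ᵐ[μ] s') (ht : t =ᵐ[μ] t') : μ[t | s] = μ[t' | s'] := by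
  rw [show μ[|s] = μ[|s'] by rw [cond, cond, measure_congr hs, Measure.restrict_congr_set hs]]
  exact measure_congr (cond_absolutelyContinuous.ae_eq ht)

section Quantile

variable {Ω : Type*} [MeasurableSpace Ω] {μ : Measure Ω} {X Y : Ω → ℝ}

lemma ae_mem_Ioc_of_measure_le [IsProbabilityMeasure μ] (hX : Measurable X)
    {a b : ℝ} (ha : μ {ω | X ω ≤ a} = 0) (hb : μ {ω | X ω ≤ b} = 1) :
    ∀ᵐ ω ∂μ, X ω ∈ Ioc a b := by
  have hb' : ∀ᵐ ω ∂μ, X ω ≤ b :=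
    (prob_compl_eq_zero_iff (s := {ω | X ω ≤ b}) (hX measurableSet_Iic)).2 hb
  have ha' : ∀ᵐ ω ∂μ, a < X ω := measure_mono_null (fun ω (h : ¬ a < X ω) => not_lt.1 h) ha
  filter_upwards [ha', hb'] with ω h₁ h₂ using ⟨h₁, h₂⟩

variable {F Vq : ℝ → ℝ} {a b : ℝ}

lemma ae_mem_Icc_of_cdf_rpow [IsProbabilityMeasure μ] (hX : Measurable X) (hFa : F a = 0)
    (hFb : F b = 1) (hab : a ≤ b) {γ : ℝ} (hγ : 0 < γ)
    (hXcdf : ∀ v ∈ Icc a b, μ {ω | X ω ≤ v} = ENNReal.ofReal (F v ^ γ)) :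
    ∀ᵐ ω ∂μ, X ω ∈ Icc a b :=
  (ae_mem_Ioc_of_measure_le hX (by simp [hXcdf a ⟨le_rfl, hab⟩, hFa, Real.zero_rpow hγ.ne'])
    (by simp [hXcdf b ⟨hab, le_rfl⟩, hFb])).mono fun _ h => Ioc_subset_Icc_self h

lemma measure_comp_le_of_cdf_rpow (hF : StrictMonoOn F (Icc a b))
    (hVmem : ∀ τ ∈ Icc (0 : ℝ) 1, Vq τ ∈ Icc a b) (hFV : ∀ τ ∈ Icc (0 : ℝ) 1, F (Vq τ) = τ)
    (hX : ∀ᵐ ω ∂μ, X ω ∈ Icc a b) {γ : ℝ}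
    (hXcdf : ∀ v ∈ Icc a b, μ {ω | X ω ≤ v} = ENNReal.ofReal (F v ^ γ))
    {t : ℝ} (ht : t ∈ Icc (0 : ℝ) 1) :
    μ {ω | F (X ω) ≤ t} = ENNReal.ofReal (t ^ γ) := by
  have hcomp : μ {ω | F (X ω) ≤ F (Vq t)} = μ {ω | X ω ≤ Vq t} :=
    measure_congr <| Filter.eventuallyEq_set.2 <| hX.mono fun _ hω => hF.le_iff_le hω (hVmem t ht)
  rwa [hFV t ht, hXcdf _ (hVmem t ht), hFV t ht] at hcomp

theorem ProbabilityTheory.IndepFun.cond_le_quantile_of_cdf_rpow [IsProbabilityMeasure μ]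
    (hX : Measurable X) (hY : Measurable Y) (hXY : IndepFun X Y μ) (hFcont : Continuous F)
    (hFa : F a = 0) (hFb : F b = 1) (hF : StrictMonoOn F (Icc a b))
    (hVmem : ∀ τ ∈ Icc (0 : ℝ) 1, Vq τ ∈ Icc a b) (hFV : ∀ τ ∈ Icc (0 : ℝ) 1, F (Vq τ) = τ)
    {α β : ℝ} (hα : 0 < α) (hβ : 0 < β)
    (hXcdf : ∀ v ∈ Icc a b, μ {ω | X ω ≤ v} = ENNReal.ofReal (F v ^ α))
    (hYcdf : ∀ v ∈ Icc a b, μ {ω | Y ω ≤ v} = ENNReal.ofReal (F v ^ β))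
    {τ : ℝ} (hτ : τ ∈ Icc (0 : ℝ) 1) :
    (μ[{ω | X ω ≤ Vq τ} | {ω | X ω < Y ω}]).toReal
      = ((α + β) * τ ^ α - α * τ ^ (α + β)) / β := by
  have hab : a ≤ b := nonempty_Icc.1 ⟨_, hVmem 0 ⟨le_rfl, zero_le_one⟩⟩
  have hXab := ae_mem_Icc_of_cdf_rpow hX hFa hFb hab hα hXcdf
  have hYab := ae_mem_Icc_of_cdf_rpow hY hFa hFb hab hβ hYcdf
  have hwin : {ω | X ω < Y ω} =ᵐ[μ] {ω | F (X ω) < F (Y ω)} := Filter.eventuallyEq_set.2 <| by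
    filter_upwards [hXab, hYab] with ω hXω hYω using (hF.lt_iff_lt hXω hYω).symm
  have hlow : {ω | X ω ≤ Vq τ} =ᵐ[μ] {ω | F (X ω) ≤ τ} := Filter.eventuallyEq_set.2 <| by
    filter_upwards [hXab] with ω hXω
    exact (hF.le_iff_le hXω (hVmem τ hτ)).symm.trans (by rw [hFV τ hτ])
  have hFm : Measurable F := hFcont.measurable
  rw [cond_congr_ae hwin hlow]
  exact (hXY.comp hFm hFm).cond_le_of_cdf_rpow (hFm.comp hX) (hFm.comp hY) hα hβ
    (fun _ => measure_comp_le_of_cdf_rpow hF hVmem hFV hXab hXcdf)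
    (fun _ => measure_comp_le_of_cdf_rpow hF hVmem hFV hYab hYcdf) hτ

end Quantile

theorem conditional_winningBid_quantile_power_asymmetry_general
    {Ω : Type*} [MeasurableSpace Ω] (μ : Measure Ω) [IsProbabilityMeasure μ]
    (N : ℕ) (hN : 2 ≤ N) (l : Fin N → ℝ) (hl : ∀ i, 0 < l i)
    (a b : ℝ)
    (F Vq : ℝ → ℝ)
    (hFcont : Continuous F)
    (hFa : F a = 0) (hFb : F b = 1)
    (hFsm : StrictMonoOn F (Set.Icc a b))
    (hVmem : ∀ τ ∈ Set.Icc (0:ℝ) 1, Vq τ ∈ Set.Icc a b)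
    (hFV : ∀ τ ∈ Set.Icc (0:ℝ) 1, F (Vq τ) = τ)
    (V : Fin N → Ω → ℝ) (hVmeas : ∀ i, Measurable (V i))
    (hindep : iIndepFun V μ)
    (hcdf : ∀ i v, μ {ω | V i ω ≤ v} = ENNReal.ofReal ((F v) ^ (l i)))
    (Ψ : Fin N → ℝ → ℝ)
    (hΨ : ∀ i τ, Ψ i τ = ((∑ j, l j) * τ ^ ((∑ j, l j) - l i)
        - ((∑ j, l j) - l i) * τ ^ (∑ j, l j)) / l i) :
    ∀ i, ∀ τ ∈ Set.Icc (0:ℝ) 1,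
      (ProbabilityTheory.cond μ {ω | ∀ j, j ≠ i → V j ω < V i ω}
          {ω | ∀ j, j ≠ i → V j ω ≤ Vq τ}).toReal
        = Ψ i τ := by
  intro i τ hτ
  have : Nontrivial (Fin N) := Fin.nontrivial_iff_two_le.2 hN
  obtain ⟨j, hj⟩ := exists_ne i
  have hs : (Finset.univ.erase i).Nonempty := ⟨j, Finset.mem_erase.2 ⟨hj, Finset.mem_univ j⟩⟩
  set M : Ω → ℝ := fun ω => (Finset.univ.erase i).sup' hs (V · ω)
  have hrivals : ∑ j ∈ Finset.univ.erase i, l j = ∑ j, l j - l i :=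
    Finset.sum_erase_eq_sub (Finset.mem_univ i)
  have hMcdf : ∀ v ∈ Icc a b, μ {ω | M ω ≤ v} = ENNReal.ofReal (F v ^ (∑ j, l j - l i)) := by
    intro v hv
    have hFv : 0 ≤ F v := hFa ▸ hFsm.monotoneOn ⟨le_rfl, hv.1.trans hv.2⟩ hv hv.1
    rw [hindep.measure_sup'_le hs, Finset.prod_congr rfl fun j _ => hcdf j v,
      ← ENNReal.ofReal_prod_of_nonneg fun j _ => Real.rpow_nonneg hFv _,
      ← Real.rpow_sum_of_nonneg hFv fun j _ => (hl j).le, hrivals]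
  have hwin : {ω | ∀ j, j ≠ i → V j ω < V i ω} = {ω | M ω < V i ω} := by
    ext ω; simp [M, Finset.sup'_lt_iff]
  have hlose : {ω | ∀ j, j ≠ i → V j ω ≤ Vq τ} = {ω | M ω ≤ Vq τ} := by
    ext ω; simp [M, Finset.sup'_le_iff]
  have hrivals_pos : 0 < ∑ j, l j - l i := hrivals ▸ Finset.sum_pos (fun j _ => hl j) hs
  have hMV := hindep.indepFun_sup' hVmeas hs (Finset.notMem_erase i _)
  rw [hwin, hlose, hΨ, hMV.cond_le_quantile_of_cdf_rpow (Finset.measurable_sup'_apply hs hVmeas)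
    (hVmeas i) hFcont hFa hFb hFsm hVmem hFV hrivals_pos (hl i) hMcdf (fun v _ => hcdf i v) hτ,
    sub_add_cancel]

/-- Under the power asymmetry specification with parent c.d.f. `F`
continuous and strictly increasing from `0` to `1` on `[a,b]` with inverse quantile
function `V`, for every bidder `i` and `τ ∈ [0,1]`,
`P(max_{j≠i} V_j ≤ V(τ) | V_i > max_{j≠i} V_j) = Ψ_i(τ)` where
`Ψ_i(τ) = (Λ_N τ^{Λ_{N|i}} − Λ_{N|i} τ^{Λ_N}) / λ_i`: conditional on bidder `i`
winning, the quantile of the winning bid at level `Ψ_i(τ)` is the parent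
quantile `V(τ)`. -/
theorem conditional_winningBid_quantile_power_asymmetry
    {Ω : Type*} [MeasurableSpace Ω] (μ : Measure Ω) [IsProbabilityMeasure μ]
    (N : ℕ) (hN : 2 ≤ N) (l : Fin N → ℝ) (hl : ∀ i, 0 < l i)
    (a b : ℝ) (hab : a < b)
    (F Vq : ℝ → ℝ)
    (hFmono : Monotone F) (hFcont : Continuous F)
    (hFa : F a = 0) (hFb : F b = 1)
    (hFsm : StrictMonoOn F (Set.Icc a b))
    (hVmem : ∀ τ ∈ Set.Icc (0:ℝ) 1, Vq τ ∈ Set.Icc a b)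
    (hVF : ∀ v ∈ Set.Icc a b, Vq (F v) = v)
    (hFV : ∀ τ ∈ Set.Icc (0:ℝ) 1, F (Vq τ) = τ)
    (V : Fin N → Ω → ℝ) (hVmeas : ∀ i, Measurable (V i))
    (hindep : iIndepFun V μ)
    (hcdf : ∀ i v, μ {ω | V i ω ≤ v} = ENNReal.ofReal ((F v) ^ (l i)))
    (Ψ : Fin N → ℝ → ℝ)
    (hΨ : ∀ i τ, Ψ i τ = ((∑ j, l j) * τ ^ ((∑ j, l j) - l i)
        - ((∑ j, l j) - l i) * τ ^ (∑ j, l j)) / l i) :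
    ∀ i, ∀ τ ∈ Set.Icc (0:ℝ) 1,
      (ProbabilityTheory.cond μ {ω | ∀ j, j ≠ i → V j ω < V i ω}
          {ω | ∀ j, j ≠ i → V j ω ≤ Vq τ}).toReal
        = Ψ i τ :=
  conditional_winningBid_quantile_power_asymmetry_general μ N hN l hl a b F Vq hFcont hFa hFb hFsm
    hVmem hFV V hVmeas hindep hcdf Ψ hΨ
end
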